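/- arXiv:1411.0409 — 6 statements merged into one kernel-verified Lean document; each statement's English description precedes it below -/
import Mathlib

section
/- For every g ≥ 1, the group Sp_{2g}(ℤ) is generated by the matrix J = [[0, I_g], [−I_g, 0]] together with the g(g+1)/2 matrices M_{i,j} = [[I_g, m_{i,j}], [0, I_g]] for 1 ≤ i ≤ j ≤ g, where m_{i,j} is the g×g integer matrix all of whose entries are 0 except those at positions (i,j) and (j,i), which are equal to 1. -/
open Matrix

/-- The standard symplectic form matrix `J = [[0, I_g], [-I_g, 0]]` in `g × g` blocks. -/
def Jmat (g : ℕ) : Matrix (Fin g ⊕ Fin g) (Fin g ⊕ Fin g) ℤ :=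
  Matrix.fromBlocks 0 1 (-1) 0

/-- The symplectic group `Sp_{2g}(ℤ)`: integer matrices satisfying `ᵗγ ⬝ J ⬝ γ = J`,
as a subgroup of the general linear group. -/
def Sp (g : ℕ) : Subgroup (Matrix.GeneralLinearGroup (Fin g ⊕ Fin g) ℤ) where
  carrier := {γ | ((γ : Matrix (Fin g ⊕ Fin g) (Fin g ⊕ Fin g) ℤ))ᵀ * Jmat g *
      ((γ : Matrix (Fin g ⊕ Fin g) (Fin g ⊕ Fin g) ℤ)) = Jmat g}
  one_mem' := by simp
  mul_mem' := by
    intro a b ha hb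
    simp only [Set.mem_setOf_eq, Units.val_mul, Matrix.transpose_mul] at *
    calc (↑b)ᵀ * (↑a)ᵀ * Jmat g * ((a : Matrix (Fin g ⊕ Fin g) (Fin g ⊕ Fin g) ℤ) * ↑b)
        = (↑b)ᵀ * ((↑a)ᵀ * Jmat g * ↑a) * ↑b := by
          simp only [Matrix.mul_assoc]
      _ = Jmat g := by rw [ha, hb]
  inv_mem' := by
    intro a ha
    simp only [Set.mem_setOf_eq] at *
    have h1 : (a : Matrix (Fin g ⊕ Fin g) (Fin g ⊕ Fin g) ℤ) *
        (↑(a⁻¹) : Matrix (Fin g ⊕ Fin g) (Fin g ⊕ Fin g) ℤ) = 1 := by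
      rw [← Units.val_mul, mul_inv_cancel, Units.val_one]
    calc (↑(a⁻¹) : Matrix (Fin g ⊕ Fin g) (Fin g ⊕ Fin g) ℤ)ᵀ * Jmat g *
          (↑(a⁻¹) : Matrix (Fin g ⊕ Fin g) (Fin g ⊕ Fin g) ℤ)
        = (↑(a⁻¹) : Matrix (Fin g ⊕ Fin g) (Fin g ⊕ Fin g) ℤ)ᵀ *
            ((↑a)ᵀ * Jmat g * ↑a) * ↑(a⁻¹) := by rw [ha]
      _ = ((a : Matrix (Fin g ⊕ Fin g) (Fin g ⊕ Fin g) ℤ) *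
            (↑(a⁻¹) : Matrix (Fin g ⊕ Fin g) (Fin g ⊕ Fin g) ℤ))ᵀ * Jmat g *
            ((a : Matrix (Fin g ⊕ Fin g) (Fin g ⊕ Fin g) ℤ) *
            (↑(a⁻¹) : Matrix (Fin g ⊕ Fin g) (Fin g ⊕ Fin g) ℤ)) := by
          rw [Matrix.transpose_mul]
          simp only [Matrix.mul_assoc]
      _ = Jmat g := by rw [h1]; simp

/-- The matrix `M_{i,j} = [[I_g, m_{i,j}], [0, I_g]]` where `m_{i,j}` has `1` at positions
`(i,j)` and `(j,i)` and `0` elsewhere. -/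
def Mmat (g : ℕ) (i j : Fin g) : Matrix (Fin g ⊕ Fin g) (Fin g ⊕ Fin g) ℤ :=
  Matrix.fromBlocks 1
    (Matrix.of fun k l => if (k = i ∧ l = j) ∨ (k = j ∧ l = i) then 1 else 0) 0 1

/-!
Let `Γ` be the subgroup generated by `J` and the `M_{i,j}`. It contains `[[1, S], [0, 1]]` for
every symmetric `S` (an integral combination of the `m_{i,j}`) and, conjugating by `J`,
`[[1, 0], [S, 1]]`. On vectors these add multiples of one coordinate to a partner coordinate, so
the Euclidean algorithm clears coordinates. Write `e_l`, `f_l` for the basis vectors at `inl l`,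
`inr l`. By induction on `k`, left multiplication by elements of `Γ` fixing `e_0, …, e_{k-1}`
makes the column `γ e_k` of `γ ∈ Sp_{2g}(ℤ)` a combination of `e_0, …, e_k`. As `γ` preserves
the symplectic form and fixes `e_l` for `l < k`, the `e_k`-coefficient of `γ e_k` times the
`f_k`-coefficient of `γ f_k` is `1`, so it is `±1`, and one more element of `Γ` turns the column
into `e_k`. Once `γ` fixes every `e_l`, it is `[[1, B], [0, 1]]` with `B` symmetric, hence in `Γ`.
-/

theorem Int.exists_rel_zero_of_shear_closed {R : ℤ → ℤ → Prop}
    (shear₁ : ∀ a b t, R a b → R (a + t * b) b) (shear₂ : ∀ a b t, R a b → R a (b + t * a))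
    {a b : ℤ} (h : R a b) : ∃ c, R c 0 := by
  -- `(a, b) ↦ (a + b, b) ↦ (a + b, -a) ↦ (b, -a)`
  have rotate : ∀ {a b}, R a b → R b (-a) := fun {a b} h => by
    have := shear₁ _ _ 1 (shear₂ _ _ (-1) (shear₁ _ _ 1 h))
    ring_nf at this ⊢
    exact this
  induction hn : b.natAbs using Nat.strong_induction_on generalizing a b with
  | _ n ih =>
    rcases eq_or_ne b 0 with rfl | hb
    · exact ⟨a, h⟩
    have hmod : R (a % b) b := by
      simpa [Int.emod_def, sub_eq_add_neg, mul_comm] using shear₁ a b (-(a / b)) h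
    refine ih _ ?_ (rotate hmod) rfl
    have := Int.emod_nonneg a hb
    have := Int.emod_lt a hb
    omega

namespace Matrix

variable {n R : Type*} [Fintype n] [DecidableEq n]

def fixingSubmonoid [Semiring R] (V : Set (n → R)) : Submonoid (Matrix n n R) where
  carrier := {P | ∀ v ∈ V, P *ᵥ v = v}
  one_mem' v _ := one_mulVec v
  mul_mem' {P Q} hP hQ v hv := by rw [← mulVec_mulVec, hQ v hv, hP v hv]

open Function in
theorem exists_mem_mulVec_eq_update_update_zero (S : Submonoid (Matrix n n ℤ)) (x : n → ℤ)
    {p q : n} (hpq : p ≠ q)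
    (shear₁ : ∀ v : n → ℤ, (∀ r, r ≠ p → r ≠ q → v r = x r) →
      ∀ t, ∃ P ∈ S, P *ᵥ v = update v p (v p + t * v q))
    (shear₂ : ∀ v : n → ℤ, (∀ r, r ≠ p → r ≠ q → v r = x r) →
      ∀ t, ∃ P ∈ S, P *ᵥ v = update v q (v q + t * v p)) :
    ∃ P ∈ S, ∃ a, P *ᵥ x = update (update x p a) q 0 := by
  set w : ℤ → ℤ → n → ℤ := fun a b => update (update x p a) q b
  have hw : ∀ a b r, r ≠ p → r ≠ q → w a b r = x r := fun a b r hp hq => by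
    simp [w, hp, hq]
  have hwp : ∀ a b, w a b p = a := fun a b => by simp [w, hpq]
  have hwq : ∀ a b, w a b q = b := fun a b => by simp [w]
  obtain ⟨a, P, hP, hPx⟩ := Int.exists_rel_zero_of_shear_closed
    (R := fun a b => ∃ P ∈ S, P *ᵥ x = w a b) (a := x p) (b := x q)
    (fun a b t ⟨P, hP, hPx⟩ => by
      obtain ⟨Q, hQ, hQw⟩ := shear₁ (w a b) (hw a b) t
      refine ⟨Q * P, S.mul_mem hQ hP, ?_⟩
      rw [← mulVec_mulVec, hPx, hQw, hwp, hwq]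
      simp only [w, update_comm hpq.symm, update_idem])
    (fun a b t ⟨P, hP, hPx⟩ => by
      obtain ⟨Q, hQ, hQw⟩ := shear₂ (w a b) (hw a b) t
      refine ⟨Q * P, S.mul_mem hQ hP, ?_⟩
      rw [← mulVec_mulVec, hPx, hQw, hwp, hwq]
      simp only [w, update_idem])
    ⟨1, S.one_mem, by simp [w]⟩
  exact ⟨P, hP, a, hPx⟩

theorem exists_isSymm_mulVec_single_eq [NonAssocSemiring R] (k : n) (v : n → R) :
    ∃ T : Matrix n n R, T.IsSymm ∧ T *ᵥ Pi.single k 1 = v := by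
  refine ⟨of fun i j => if j = k then v i else if i = k then v j else 0,
    IsSymm.ext fun i j => ?_, ?_⟩
  · simp only [of_apply]
    split_ifs <;> simp_all
  · ext i
    simp

end Matrix

namespace Sp

open Matrix Sum Function

variable {g : ℕ}

def generators (g : ℕ) : Set (Sp g) :=
  {γ : Sp g | ((γ : Matrix.GeneralLinearGroup (Fin g ⊕ Fin g) ℤ) :
      Matrix (Fin g ⊕ Fin g) (Fin g ⊕ Fin g) ℤ) = Jmat g} ∪
    {γ : Sp g | ∃ i j : Fin g, i ≤ j ∧
      ((γ : Matrix.GeneralLinearGroup (Fin g ⊕ Fin g) ℤ) :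
      Matrix (Fin g ⊕ Fin g) (Fin g ⊕ Fin g) ℤ) = Mmat g i j}

def toMatrix (g : ℕ) : Sp g →* Matrix (Fin g ⊕ Fin g) (Fin g ⊕ Fin g) ℤ :=
  (Units.coeHom _).comp (Sp g).subtype

theorem toMatrix_injective : Injective (toMatrix g) :=
  fun _ _ h => Subtype.ext (Units.ext h)

theorem toMatrix_symplectic (γ : Sp g) : (toMatrix g γ)ᵀ * Jmat g * toMatrix g γ = Jmat g :=
  γ.2

def genMatrices (g : ℕ) : Submonoid (Matrix (Fin g ⊕ Fin g) (Fin g ⊕ Fin g) ℤ) :=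
  (Subgroup.closure (generators g)).toSubmonoid.map (toMatrix g)

theorem mem_genMatrices {M : Matrix (Fin g ⊕ Fin g) (Fin g ⊕ Fin g) ℤ} :
    M ∈ genMatrices g ↔ ∃ γ ∈ Subgroup.closure (generators g), toMatrix g γ = M :=
  Submonoid.mem_map

theorem mem_genMatrices_of_mul_eq_one {P N : Matrix (Fin g ⊕ Fin g) (Fin g ⊕ Fin g) ℤ}
    (hP : P ∈ genMatrices g) (h : P * N = 1) : N ∈ genMatrices g := by
  obtain ⟨γ, hγ, rfl⟩ := mem_genMatrices.1 hP
  refine mem_genMatrices.2 ⟨γ⁻¹, inv_mem hγ, ?_⟩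
  calc toMatrix g γ⁻¹ = toMatrix g γ⁻¹ * (toMatrix g γ * N) := by rw [h, mul_one]
    _ = N := by rw [← mul_assoc, ← map_mul, inv_mul_cancel, map_one, one_mul]

theorem Jmat_mul_self : Jmat g * Jmat g = -1 := by
  ext (i | i) (j | j) <;> simp [Jmat, fromBlocks_multiply, one_apply]

theorem Jmat_transpose : (Jmat g)ᵀ = -Jmat g := by
  simp [Jmat, fromBlocks_transpose, fromBlocks_neg]

/-- The inverse of a symplectic matrix `M` is `-J Mᵀ J`. -/
def ofSymplectic (M : Matrix (Fin g ⊕ Fin g) (Fin g ⊕ Fin g) ℤ)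
    (hM : Mᵀ * Jmat g * M = Jmat g) : Sp g :=
  have hinv : -(Jmat g * Mᵀ * Jmat g) * M = 1 := by
    rw [neg_mul, mul_assoc, mul_assoc, ← mul_assoc Mᵀ, hM, Jmat_mul_self, neg_neg]
  ⟨⟨M, _, mul_eq_one_comm.1 hinv, hinv⟩, hM⟩

def upperUnipotent (S : Matrix (Fin g) (Fin g) ℤ) : Matrix (Fin g ⊕ Fin g) (Fin g ⊕ Fin g) ℤ :=
  fromBlocks 1 S 0 1

def lowerUnipotent (S : Matrix (Fin g) (Fin g) ℤ) : Matrix (Fin g ⊕ Fin g) (Fin g ⊕ Fin g) ℤ :=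
  fromBlocks 1 0 S 1

theorem upperUnipotent_zero : upperUnipotent (0 : Matrix (Fin g) (Fin g) ℤ) = 1 :=
  fromBlocks_one

theorem upperUnipotent_add (S T : Matrix (Fin g) (Fin g) ℤ) :
    upperUnipotent (S + T) = upperUnipotent S * upperUnipotent T := by
  simp [upperUnipotent, fromBlocks_multiply, add_comm]

theorem upperUnipotent_symplectic {S : Matrix (Fin g) (Fin g) ℤ} (hS : S.IsSymm) :
    (upperUnipotent S)ᵀ * Jmat g * upperUnipotent S = Jmat g := by
  simp [upperUnipotent, Jmat, fromBlocks_transpose, fromBlocks_multiply, hS.eq]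

theorem Jmat_mem : Jmat g ∈ genMatrices g := by
  have hJ : (Jmat g)ᵀ * Jmat g * Jmat g = Jmat g := by
    rw [Jmat_transpose, neg_mul, Jmat_mul_self]; simp
  exact mem_genMatrices.2 ⟨ofSymplectic _ hJ, Subgroup.subset_closure (Or.inl rfl), rfl⟩

/-- The block `m_{i,j}`, so that `Mmat g i j = upperUnipotent (symmUnit i j)` by definition. -/
def symmUnit (i j : Fin g) : Matrix (Fin g) (Fin g) ℤ :=
  of fun k l => if (k = i ∧ l = j) ∨ (k = j ∧ l = i) then 1 else 0

theorem symmUnit_isSymm (i j : Fin g) : (symmUnit i j).IsSymm :=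
  IsSymm.ext fun k l => by simp only [symmUnit, of_apply]; exact if_congr (by tauto) rfl rfl

theorem symmUnit_comm (i j : Fin g) : symmUnit i j = symmUnit j i := by
  ext k l; simp only [symmUnit, of_apply]; exact if_congr (by tauto) rfl rfl

theorem upperUnipotent_symmUnit_mem (i j : Fin g) :
    upperUnipotent (symmUnit i j) ∈ genMatrices g := by
  wlog hij : i ≤ j generalizing i j
  · rw [symmUnit_comm]; exact this j i (le_of_not_ge hij)
  exact mem_genMatrices.2 ⟨ofSymplectic _ (upperUnipotent_symplectic (symmUnit_isSymm i j)),
    Subgroup.subset_closure (Or.inr ⟨i, j, hij, rfl⟩), rfl⟩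

theorem single_add_transpose_sub_diagonal (i j : Fin g) (c : ℤ) :
    single i j c + (single i j c)ᵀ - diagonal (single i j c).diag = c • symmUnit i j := by
  ext k l
  simp only [symmUnit, single, diagonal, diag, Matrix.add_apply, Matrix.sub_apply,
    transpose_apply, of_apply, Matrix.smul_apply, smul_eq_mul]
  split_ifs <;> grind

theorem upperUnipotent_mem {S : Matrix (Fin g) (Fin g) ℤ} (hS : S.IsSymm) :
    upperUnipotent S ∈ genMatrices g := by
  let A : AddSubgroup (Matrix (Fin g) (Fin g) ℤ) :=
    { carrier := {S | upperUnipotent S ∈ genMatrices g}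
      zero_mem' := by simp [upperUnipotent_zero, one_mem]
      add_mem' := fun {S T} hS hT => by
        show upperUnipotent (S + T) ∈ genMatrices g
        rw [upperUnipotent_add]; exact mul_mem hS hT
      neg_mem' := fun {S} ha => mem_genMatrices_of_mul_eq_one ha <| by
        rw [← upperUnipotent_add, add_neg_cancel, upperUnipotent_zero] }
  -- `X ↦ X + Xᵀ - diagonal X.diag` is additive, sends `single i j c` to `c • m_{i,j}`, and sends
  -- the upper triangle of `S` to `S`.
  have hA : ∀ X, X + Xᵀ - diagonal X.diag ∈ A := fun X => by
    induction X using Matrix.induction_on' with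
    | h_zero => simp [A.zero_mem]
    | h_add X Y hX hY =>
      convert A.add_mem hX hY using 1
      rw [transpose_add, diag_add,
        show diagonal (X.diag + Y.diag) = diagonal X.diag + diagonal Y.diag from
          (diagonal_add _ _).symm]
      abel
    | h_std_basis i j c =>
      rw [single_add_transpose_sub_diagonal]
      exact A.zsmul_mem (upperUnipotent_symmUnit_mem i j) c
  set X : Matrix (Fin g) (Fin g) ℤ := of fun i j => if i ≤ j then S i j else 0
  have hX : X + Xᵀ - diagonal X.diag = S := by
    ext i j
    simp only [X, Matrix.add_apply, Matrix.sub_apply, transpose_apply, diagonal_apply,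
      Matrix.diag_apply, of_apply]
    rcases lt_trichotomy i j with h | rfl | h
    · simp [h.ne, h.not_ge, h.le]
    · simp
    · simp [h.ne', h.not_ge, h.le, hS.apply]
  exact (hX ▸ hA X : S ∈ A)

theorem lowerUnipotent_mem {S : Matrix (Fin g) (Fin g) ℤ} (hS : S.IsSymm) :
    lowerUnipotent S ∈ genMatrices g := by
  have hconj : Jmat g * upperUnipotent (-S) * -Jmat g = lowerUnipotent S := by
    simp [Jmat, upperUnipotent, lowerUnipotent, fromBlocks_neg, fromBlocks_multiply]
  have hJinv : -Jmat g ∈ genMatrices g :=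
    mem_genMatrices_of_mul_eq_one Jmat_mem (by rw [mul_neg, Jmat_mul_self, neg_neg])
  rw [← hconj]
  exact mul_mem (mul_mem Jmat_mem (upperUnipotent_mem hS.neg)) hJinv


theorem upperUnipotent_mulVec (S : Matrix (Fin g) (Fin g) ℤ) (v : Fin g ⊕ Fin g → ℤ) :
    upperUnipotent S *ᵥ v = Sum.elim (v ∘ inl + S *ᵥ (v ∘ inr)) (v ∘ inr) := by
  simp [upperUnipotent, fromBlocks_mulVec]

theorem lowerUnipotent_mulVec (S : Matrix (Fin g) (Fin g) ℤ) (v : Fin g ⊕ Fin g → ℤ) :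
    lowerUnipotent S *ᵥ v = Sum.elim (v ∘ inl) (v ∘ inr + S *ᵥ (v ∘ inl)) := by
  simp [lowerUnipotent, fromBlocks_mulVec, add_comm]

theorem upperUnipotent_single_mulVec (i : Fin g) (t : ℤ) (v : Fin g ⊕ Fin g → ℤ) :
    upperUnipotent (single i i t) *ᵥ v = update v (inl i) (v (inl i) + t * v (inr i)) := by
  ext (r | r) <;> simp [upperUnipotent_mulVec, single_mulVec, update_apply]
  split_ifs <;> simp_all

theorem lowerUnipotent_single_mulVec (i : Fin g) (t : ℤ) (v : Fin g ⊕ Fin g → ℤ) :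
    lowerUnipotent (single i i t) *ᵥ v = update v (inr i) (v (inr i) + t * v (inl i)) := by
  ext (r | r) <;> simp [lowerUnipotent_mulVec, single_mulVec, update_apply]
  split_ifs <;> simp_all

theorem upperUnipotent_single_add_single_mulVec (i j : Fin g) (t : ℤ) {v : Fin g ⊕ Fin g → ℤ}
    (hv : v (inr i) = 0) :
    upperUnipotent (single i j t + single j i t) *ᵥ v =
      update v (inl i) (v (inl i) + t * v (inr j)) := by
  ext (r | r) <;> simp [upperUnipotent_mulVec, single_mulVec, update_apply, add_mulVec]
  split_ifs <;> simp_all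

theorem lowerUnipotent_single_add_single_mulVec (i j : Fin g) (t : ℤ) {v : Fin g ⊕ Fin g → ℤ}
    (hv : v (inl j) = 0) :
    lowerUnipotent (single i j t + single j i t) *ᵥ v =
      update v (inr j) (v (inr j) + t * v (inl i)) := by
  ext (r | r) <;> simp [lowerUnipotent_mulVec, single_mulVec, update_apply, add_mulVec]
  split_ifs <;> simp_all

def inlBasisBelow (g k : ℕ) : Set (Fin g ⊕ Fin g → ℤ) :=
  {v | ∃ l : Fin g, (l : ℕ) < k ∧ Pi.single (inl l) 1 = v}

def genStabilizer (g k : ℕ) : Submonoid (Matrix (Fin g ⊕ Fin g) (Fin g ⊕ Fin g) ℤ) :=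
  genMatrices g ⊓ fixingSubmonoid (inlBasisBelow g k)

theorem upperUnipotent_mem_genStabilizer {S : Matrix (Fin g) (Fin g) ℤ} (hS : S.IsSymm) (k : ℕ) :
    upperUnipotent S ∈ genStabilizer g k := by
  refine ⟨upperUnipotent_mem hS, ?_⟩
  rintro _ ⟨l, -, rfl⟩
  simp [← Sum.elim_single_zero, upperUnipotent_mulVec]

theorem lowerUnipotent_mem_genStabilizer {S : Matrix (Fin g) (Fin g) ℤ} (hS : S.IsSymm) {k : ℕ}
    (hcol : ∀ l : Fin g, (l : ℕ) < k → S.col l = 0) :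
    lowerUnipotent S ∈ genStabilizer g k := by
  refine ⟨lowerUnipotent_mem hS, ?_⟩
  rintro _ ⟨l, hl, rfl⟩
  simp [← Sum.elim_single_zero, lowerUnipotent_mulVec, hcol l hl]

theorem isSymm_single_add_single (i j : Fin g) (t : ℤ) : (single i j t + single j i t).IsSymm := by
  simp [IsSymm, transpose_add, transpose_single, add_comm]

theorem exists_mulVec_eq_update_inl (k : ℕ) (m : Fin g) (v : Fin g ⊕ Fin g → ℤ) (t : ℤ) :
    ∃ P ∈ genStabilizer g k, P *ᵥ v = update v (inl m) (v (inl m) + t * v (inr m)) :=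
  ⟨_, upperUnipotent_mem_genStabilizer (transpose_single m m t) k,
    upperUnipotent_single_mulVec m t v⟩

theorem exists_mulVec_eq_update_inr {k : ℕ} {m : Fin g} (hm : k ≤ m) (v : Fin g ⊕ Fin g → ℤ)
    (t : ℤ) : ∃ P ∈ genStabilizer g k, P *ᵥ v = update v (inr m) (v (inr m) + t * v (inl m)) := by
  refine ⟨_, lowerUnipotent_mem_genStabilizer (transpose_single m m t) fun l hl => ?_,
    lowerUnipotent_single_mulVec m t v⟩
  have : m ≠ l := fun h => by omega
  ext r
  simp [this]

theorem exists_mulVec_eq_update_inl_of_inr_eq_zero (k : ℕ) (i j : Fin g)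
    {v : Fin g ⊕ Fin g → ℤ} (hv : v (inr i) = 0) (t : ℤ) :
    ∃ P ∈ genStabilizer g k, P *ᵥ v = update v (inl i) (v (inl i) + t * v (inr j)) :=
  ⟨_, upperUnipotent_mem_genStabilizer (isSymm_single_add_single i j t) k,
    upperUnipotent_single_add_single_mulVec i j t hv⟩

theorem exists_mulVec_eq_update_inr_of_inl_eq_zero {k : ℕ} {i j : Fin g} (hi : k ≤ i)
    (hj : k ≤ j) {v : Fin g ⊕ Fin g → ℤ} (hv : v (inl j) = 0) (t : ℤ) :
    ∃ P ∈ genStabilizer g k, P *ᵥ v = update v (inr j) (v (inr j) + t * v (inl i)) := by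
  refine ⟨_, lowerUnipotent_mem_genStabilizer (isSymm_single_add_single i j t) fun l hl => ?_,
    lowerUnipotent_single_add_single_mulVec i j t hv⟩
  have hil : i ≠ l := fun h => by omega
  have hjl : j ≠ l := fun h => by omega
  ext r
  simp [hil, hjl]

theorem exists_mulVec_clear_inr {k : ℕ} {m : Fin g} (hm : k ≤ m) (x : Fin g ⊕ Fin g → ℤ) :
    ∃ P ∈ genStabilizer g k, ∃ a, P *ᵥ x = update (update x (inl m) a) (inr m) 0 :=
  exists_mem_mulVec_eq_update_update_zero _ x inl_ne_inr
    (fun v _ => exists_mulVec_eq_update_inl k m v) (fun v _ => exists_mulVec_eq_update_inr hm v)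

theorem exists_mulVec_clear_inl {k : ℕ} {m : Fin g} (hm : k ≤ m) (x : Fin g ⊕ Fin g → ℤ) :
    ∃ P ∈ genStabilizer g k, ∃ a, P *ᵥ x = update (update x (inr m) a) (inl m) 0 :=
  exists_mem_mulVec_eq_update_update_zero _ x inr_ne_inl
    (fun v _ => exists_mulVec_eq_update_inr hm v) (fun v _ => exists_mulVec_eq_update_inl k m v)

theorem exists_mulVec_clear_pair {k m : Fin g} (hkm : k < m) {x : Fin g ⊕ Fin g → ℤ}
    (hx : x (inr k) = 0) : ∃ P ∈ genStabilizer g k, ∃ a,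
      P *ᵥ x = update (update (update x (inl k) a) (inl m) 0) (inr m) 0 := by
  -- Once `inl m` is cleared, the shears by `single k m t + single m k t` move only `inl k`
  -- and `inr m`.
  obtain ⟨P, hP, a, hPx⟩ := exists_mulVec_clear_inl (k := k) hkm.le x
  set y := update (update x (inr m) a) (inl m) 0
  have hyk : ∀ v : Fin g ⊕ Fin g → ℤ, (∀ r, r ≠ inl k → r ≠ inr m → v r = y r) →
      v (inr k) = 0 ∧ v (inl m) = 0 := fun v hv => by
    rw [hv _ inr_ne_inl (by simp [hkm.ne]), hv _ (by simp [hkm.ne']) inl_ne_inr]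
    simp [y, hkm.ne, hx]
  obtain ⟨Q, hQ, b, hQy⟩ := exists_mem_mulVec_eq_update_update_zero _ y inl_ne_inr
    (fun v hv => exists_mulVec_eq_update_inl_of_inr_eq_zero k k m (hyk v hv).1)
    (fun v hv => exists_mulVec_eq_update_inr_of_inl_eq_zero le_rfl hkm.le (hyk v hv).2)
  refine ⟨Q * P, mul_mem hQ hP, b, ?_⟩
  rw [← mulVec_mulVec, hPx, hQy]
  ext r
  simp only [y, update_apply]
  split_ifs <;> simp_all

theorem exists_mulVec_clear_above (k : Fin g) (s : Finset (Fin g)) (hs : ∀ m ∈ s, k < m)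
    {x : Fin g ⊕ Fin g → ℤ} (hx : x (inr k) = 0) : ∃ P ∈ genStabilizer g k,
      (P *ᵥ x) (inr k) = 0 ∧ ∀ m ∈ s, (P *ᵥ x) (inl m) = 0 ∧ (P *ᵥ x) (inr m) = 0 := by
  induction s using Finset.induction_on with
  | empty => exact ⟨1, one_mem _, by simpa using hx, by simp⟩
  | insert m s hms ih =>
    obtain ⟨P, hP, hPk, hPs⟩ := ih fun m' hm' => hs m' (Finset.mem_insert_of_mem hm')
    have hkm := hs m (Finset.mem_insert_self m s)
    obtain ⟨Q, hQ, a, hQx⟩ := exists_mulVec_clear_pair hkm hPk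
    refine ⟨Q * P, mul_mem hQ hP, ?_, fun m' hm' => ?_⟩
    · simp [← mulVec_mulVec, hQx, hkm.ne, hPk]
    rcases Finset.mem_insert.1 hm' with rfl | hm'
    · simp [← mulVec_mulVec, hQx]
    · have hm'm : m' ≠ m := fun h => hms (h ▸ hm')
      have hkm' : m' ≠ k := (hs m' (Finset.mem_insert_of_mem hm')).ne'
      simp [← mulVec_mulVec, hQx, hm'm, hkm', hPs m' hm']

theorem exists_mulVec_clear (k : Fin g) (x : Fin g ⊕ Fin g → ℤ) : ∃ P ∈ genStabilizer g k,
    (∀ m, k ≤ m → (P *ᵥ x) (inr m) = 0) ∧ ∀ m, k < m → (P *ᵥ x) (inl m) = 0 := by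
  obtain ⟨P, hP, a, hPx⟩ := exists_mulVec_clear_inr (k := k) le_rfl x
  obtain ⟨Q, hQ, hQk, hQs⟩ := exists_mulVec_clear_above k (Finset.univ.filter (k < ·))
    (fun m hm => (Finset.mem_filter.1 hm).2) (x := P *ᵥ x) (by simp [hPx])
  refine ⟨Q * P, mul_mem hQ hP, fun m hm => ?_, fun m hm => ?_⟩
  · rw [← mulVec_mulVec]
    rcases hm.eq_or_lt with rfl | hm
    · exact hQk
    · exact (hQs m (by simpa using hm)).2
  · rw [← mulVec_mulVec]
    exact (hQs m (by simpa using hm)).1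

theorem Jmat_mulVec (v : Fin g ⊕ Fin g → ℤ) : Jmat g *ᵥ v = Sum.elim (v ∘ inr) (-(v ∘ inl)) := by
  simp [Jmat, fromBlocks_mulVec, neg_mulVec]

theorem single_inl_dotProduct_Jmat_mulVec (l : Fin g) (v : Fin g ⊕ Fin g → ℤ) :
    Pi.single (inl l) 1 ⬝ᵥ (Jmat g *ᵥ v) = v (inr l) := by
  simp [Jmat_mulVec]

theorem toMatrix_mulVec_dotProduct_Jmat_mulVec (γ : Sp g) (x y : Fin g ⊕ Fin g → ℤ) :
    (toMatrix g γ *ᵥ x) ⬝ᵥ (Jmat g *ᵥ (toMatrix g γ *ᵥ y)) = x ⬝ᵥ (Jmat g *ᵥ y) := by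
  rw [← vecMul_transpose, ← dotProduct_mulVec, mulVec_mulVec, mulVec_mulVec, toMatrix_symplectic]

/-- The coordinate `inr l` is the symplectic pairing with `e_{inl l}`, which `γ` fixes. -/
theorem toMatrix_mulVec_apply_inr_of_lt {γ : Sp g} {k : ℕ}
    (hγ : toMatrix g γ ∈ fixingSubmonoid (inlBasisBelow g k)) {l : Fin g} (hl : (l : ℕ) < k)
    (v : Fin g ⊕ Fin g → ℤ) : (toMatrix g γ *ᵥ v) (inr l) = v (inr l) := by
  rw [← single_inl_dotProduct_Jmat_mulVec l (toMatrix g γ *ᵥ v), ← hγ _ ⟨l, hl, rfl⟩,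
    toMatrix_mulVec_dotProduct_Jmat_mulVec, single_inl_dotProduct_Jmat_mulVec]

theorem mulVec_single_inl_apply_inl_eq_one_or_neg_one {γ : Sp g} {k : Fin g}
    (hγ : toMatrix g γ ∈ fixingSubmonoid (inlBasisBelow g k))
    (hinr : ∀ m, (toMatrix g γ *ᵥ Pi.single (inl k) 1) (inr m) = 0)
    (hinl : ∀ m, k < m → (toMatrix g γ *ᵥ Pi.single (inl k) 1) (inl m) = 0) :
    (toMatrix g γ *ᵥ Pi.single (inl k) 1) (inl k) = 1 ∨
      (toMatrix g γ *ᵥ Pi.single (inl k) 1) (inl k) = -1 := by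
  set x := toMatrix g γ *ᵥ Pi.single (inl k) 1
  set y := toMatrix g γ *ᵥ Pi.single (inr k) 1
  have hy : ∀ m, m < k → y (inr m) = 0 := fun m hm =>
    (toMatrix_mulVec_apply_inr_of_lt hγ hm _).trans (by simp [hm.ne])
  have hxy : x (inl k) * y (inr k) = 1 := by
    have hω : x ⬝ᵥ (Jmat g *ᵥ y) = 1 := by
      rw [toMatrix_mulVec_dotProduct_Jmat_mulVec, single_inl_dotProduct_Jmat_mulVec]; simp
    rw [dotProduct, Fintype.sum_sum_type, Jmat_mulVec] at hω
    simp only [hinr, zero_mul, Finset.sum_const_zero, add_zero, Sum.elim_inl,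
      Function.comp_apply] at hω
    rwa [Finset.sum_eq_single k (fun m _ hmk => ?_) (by simp)] at hω
    rcases lt_or_gt_of_ne hmk with hm | hm
    · rw [hy m hm, mul_zero]
    · rw [hinl m hm, zero_mul]
  exact Int.eq_one_or_neg_one_of_mul_eq_one hxy

theorem exists_mulVec_elim_eq_single (k : Fin g) {a : Fin g → ℤ} (ha : a k = 1 ∨ a k = -1) :
    ∃ P ∈ genStabilizer g k, P *ᵥ Sum.elim a 0 = Pi.single (inl k) 1 := by
  obtain ⟨T, hT, hTk⟩ := exists_isSymm_mulVec_single_eq k (Pi.single k 1 - a)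
  have hL : ∀ c : ℤ, lowerUnipotent (single k k c) ∈ genStabilizer g k := fun c =>
    lowerUnipotent_mem_genStabilizer (transpose_single k k c) fun l hl => by
      have hkl : k ≠ l := fun h => by subst h; omega
      ext r; simp [hkl]
  refine ⟨lowerUnipotent (single k k (-1)) * upperUnipotent T * lowerUnipotent (single k k (a k)),
    mul_mem (mul_mem (hL _) (upperUnipotent_mem_genStabilizer hT k)) (hL _), ?_⟩
  have hsq : a k * a k = 1 := by rcases ha with h | h <;> simp [h]
  calc _ = lowerUnipotent (single k k (-1)) *ᵥ (upperUnipotent T *ᵥ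
        (lowerUnipotent (single k k (a k)) *ᵥ Sum.elim a 0)) := by
        simp only [mulVec_mulVec, mul_assoc]
    _ = lowerUnipotent (single k k (-1)) *ᵥ (upperUnipotent T *ᵥ Sum.elim a (Pi.single k 1)) := by
        congr 2
        rw [lowerUnipotent_mulVec, Sum.elim_comp_inl, Sum.elim_comp_inr, single_mulVec, hsq,
          zero_add]
        rfl
    _ = lowerUnipotent (single k k (-1)) *ᵥ Sum.elim (Pi.single k 1) (Pi.single k 1) := by
        simp [upperUnipotent_mulVec, hTk]
    _ = Pi.single (inl k) 1 := by
        rw [lowerUnipotent_mulVec, Sum.elim_comp_inl, Sum.elim_comp_inr, single_mulVec,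
          ← Sum.elim_single_zero]
        congr 1
        ext r
        by_cases hr : r = k <;> simp [hr]

theorem exists_mul_mem_fixingSubmonoid_succ (γ : Sp g) (k : Fin g)
    (hγ : toMatrix g γ ∈ fixingSubmonoid (inlBasisBelow g k)) :
    ∃ π ∈ Subgroup.closure (generators g),
      toMatrix g (π * γ) ∈ fixingSubmonoid (inlBasisBelow g (k + 1)) := by
  obtain ⟨P, ⟨hPgen, hPfix⟩, hinr, hinl⟩ :=
    exists_mulVec_clear k (toMatrix g γ *ᵥ Pi.single (inl k) 1)
  obtain ⟨π, hπ, rfl⟩ := mem_genMatrices.1 hPgen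
  have hπγ : toMatrix g (π * γ) ∈ fixingSubmonoid (inlBasisBelow g k) := by
    rw [map_mul]; exact mul_mem hPfix hγ
  rw [mulVec_mulVec, ← map_mul] at hinr hinl
  set x := toMatrix g (π * γ) *ᵥ Pi.single (inl k) 1
  have hx : ∀ m, x (inr m) = 0 := fun m => (lt_or_ge m k).elim
    (fun hm => (toMatrix_mulVec_apply_inr_of_lt hπγ hm _).trans (by simp)) (hinr m)
  have hsign := mulVec_single_inl_apply_inl_eq_one_or_neg_one hπγ hx hinl
  obtain ⟨Q, ⟨hQgen, hQfix⟩, hQx⟩ := exists_mulVec_elim_eq_single k (a := x ∘ inl) hsign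
  obtain ⟨σ, hσ, rfl⟩ := mem_genMatrices.1 hQgen
  refine ⟨σ * π, mul_mem hσ hπ, ?_⟩
  rintro _ ⟨l, hl, rfl⟩
  rw [mul_assoc, map_mul, ← mulVec_mulVec]
  rcases Nat.lt_succ_iff_lt_or_eq.1 hl with hl | hl
  · rw [hπγ _ ⟨l, hl, rfl⟩, hQfix _ ⟨l, hl, rfl⟩]
  · obtain rfl := Fin.ext hl
    have hxe : x = Sum.elim (x ∘ inl) 0 := by
      ext (r | r)
      · rfl
      · exact hx r
    change toMatrix g σ *ᵥ x = _
    rw [hxe]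
    exact hQx

theorem exists_mul_mem_fixingSubmonoid (γ : Sp g) {k : ℕ} (hk : k ≤ g) :
    ∃ π ∈ Subgroup.closure (generators g),
      toMatrix g (π * γ) ∈ fixingSubmonoid (inlBasisBelow g k) := by
  induction k with
  | zero => exact ⟨1, one_mem _, by rintro _ ⟨l, hl, rfl⟩; omega⟩
  | succ k ih =>
    obtain ⟨π, hπ, hfix⟩ := ih (Nat.le_of_succ_le hk)
    obtain ⟨σ, hσ, hσfix⟩ := exists_mul_mem_fixingSubmonoid_succ (π * γ) ⟨k, hk⟩ hfix
    exact ⟨σ * π, mul_mem hσ hπ, by rwa [mul_assoc]⟩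

theorem mem_closure_of_mem_fixingSubmonoid (γ : Sp g)
    (hγ : toMatrix g γ ∈ fixingSubmonoid (inlBasisBelow g g)) :
    γ ∈ Subgroup.closure (generators g) := by
  set N := toMatrix g γ
  have hcol : ∀ l, N.col (inl l) = Pi.single (inl l) 1 := fun l => by
    rw [← mulVec_single_one]; exact hγ _ ⟨l, l.isLt, rfl⟩
  have h11 : N.toBlocks₁₁ = 1 := by
    ext i l; simpa [toBlocks₁₁, one_apply, Pi.single_apply] using congrFun (hcol l) (inl i)
  have h21 : N.toBlocks₂₁ = 0 := by
    ext i l; simpa [toBlocks₂₁] using congrFun (hcol l) (inr i)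
  have hN : Nᵀ * Jmat g * N = Jmat g := toMatrix_symplectic γ
  rw [← fromBlocks_toBlocks N, h11, h21] at hN
  simp only [fromBlocks_transpose, transpose_one, transpose_zero, Jmat, fromBlocks_multiply,
    mul_zero, mul_neg, mul_one, neg_zero, add_zero, zero_add, zero_mul, one_mul, neg_mul,
    fromBlocks_inj, neg_inj, transpose_eq_one, and_self_left, true_and] at hN
  obtain ⟨h22, hB⟩ := hN
  have hsymm : N.toBlocks₁₂.IsSymm := by
    rw [h22, transpose_one, one_mul, mul_one, neg_add_eq_zero] at hB
    exact hB.symm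
  obtain ⟨σ, hσ, hσN⟩ := mem_genMatrices.1 (upperUnipotent_mem hsymm)
  have hNU : N = upperUnipotent N.toBlocks₁₂ := by
    conv_lhs => rw [← fromBlocks_toBlocks N, h11, h21, h22]
    rfl
  rwa [← toMatrix_injective (hσN.trans hNU.symm)]

end Sp

theorem sp_generated_by_J_and_translations_general (g : ℕ) :
    Subgroup.closure
      ({γ : Sp g | ((γ : Matrix.GeneralLinearGroup (Fin g ⊕ Fin g) ℤ) :
          Matrix (Fin g ⊕ Fin g) (Fin g ⊕ Fin g) ℤ) = Jmat g} ∪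
       {γ : Sp g | ∃ i j : Fin g, i ≤ j ∧
          ((γ : Matrix.GeneralLinearGroup (Fin g ⊕ Fin g) ℤ) :
          Matrix (Fin g ⊕ Fin g) (Fin g ⊕ Fin g) ℤ) = Mmat g i j}) = ⊤ := by
  refine eq_top_iff.2 fun γ _ => ?_
  change γ ∈ Subgroup.closure (Sp.generators g)
  obtain ⟨π, hπ, hfix⟩ := Sp.exists_mul_mem_fixingSubmonoid γ le_rfl
  simpa using mul_mem (inv_mem hπ) (Sp.mem_closure_of_mem_fixingSubmonoid _ hfix)

/-- `Sp_{2g}(ℤ)` is generated by `J` together with the `g(g+1)/2` matrices `M_{i,j}`,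
`1 ≤ i ≤ j ≤ g`. -/
theorem sp_generated_by_J_and_translations (g : ℕ) (hg : 1 ≤ g) :
    Subgroup.closure
      ({γ : Sp g | ((γ : Matrix.GeneralLinearGroup (Fin g ⊕ Fin g) ℤ) :
          Matrix (Fin g ⊕ Fin g) (Fin g ⊕ Fin g) ℤ) = Jmat g} ∪
       {γ : Sp g | ∃ i j : Fin g, i ≤ j ∧
          ((γ : Matrix.GeneralLinearGroup (Fin g ⊕ Fin g) ℤ) :
          Matrix (Fin g ⊕ Fin g) (Fin g ⊕ Fin g) ℤ) = Mmat g i j}) = ⊤ :=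
  sp_generated_by_J_and_translations_general g
end

section
/- For every g ≥ 1, all a, b ∈ ℚ^g, every z ∈ ℂ^g and every Ω ∈ H_g, the family of complex numbers n ↦ exp(iπ·ᵗ(n+a)·Ω·(n+a) + 2iπ·ᵗ(n+a)·(z+b)), indexed by n ∈ ℤ^g, is absolutely summable. -/
/-!
Write `x = n + a ∈ ℝ^g` and `Y = Im Ω`. The modulus of the general term is
`exp(-π ᵗx Y x - 2π ᵗx Im z)`, and positive definiteness gives `r > 0` with `ᵗx Y x ≥ r ᵗx x`.
The term is therefore dominated by a product over the coordinates of one-variable Gaussian terms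
`exp(-π r (nᵢ + aᵢ)² - 2π Im zᵢ (nᵢ + aᵢ))`, each of which is, up to a constant factor, the modulus
of a term of Jacobi's theta series with `τ = r i`, hence summable over `ℤ`.
-/

open Matrix

/-- The Siegel upper half-space: symmetric complex `g × g` matrices with positive
definite imaginary part. -/
def SiegelUpperHalf (g : ℕ) : Set (Matrix (Fin g) (Fin g) ℂ) :=
  {Ω | Ω.IsSymm ∧ (Matrix.of fun i j => (Ω i j).im).PosDef}

/-- The general term of the theta series with characteristic `(a, b)`. -/
noncomputable def thetaTerm (g : ℕ) (a b : Fin g → ℚ) (z : Fin g → ℂ)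
    (Ω : Matrix (Fin g) (Fin g) ℂ) (n : Fin g → ℤ) : ℂ :=
  Complex.exp (Real.pi * Complex.I *
      ((fun i => (n i : ℂ) + (a i : ℂ)) ⬝ᵥ Ω.mulVec (fun i => (n i : ℂ) + (a i : ℂ)))
    + 2 * Real.pi * Complex.I *
      ((fun i => (n i : ℂ) + (a i : ℂ)) ⬝ᵥ (fun i => z i + (b i : ℂ))))

/-- The theta function with characteristic `(a, b)`. -/
noncomputable def theta (g : ℕ) (a b : Fin g → ℚ) (z : Fin g → ℂ)
    (Ω : Matrix (Fin g) (Fin g) ℂ) : ℂ :=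
  ∑' n : Fin g → ℤ, thetaTerm g a b z Ω n

open Real

open scoped MatrixOrder in
theorem Matrix.PosDef.exists_pos_mul_dotProduct_self_le {n : Type*} [Fintype n] [DecidableEq n]
    {Y : Matrix n n ℝ} (hY : Y.PosDef) : ∃ r > 0, ∀ x : n → ℝ, r * (x ⬝ᵥ x) ≤ x ⬝ᵥ Y *ᵥ x := by
  -- `r` is the least point of the compact, positive spectrum of `Y`.
  obtain ⟨r, hr, hrY⟩ : ∃ r > 0, algebraMap ℝ (Matrix n n ℝ) r ≤ Y := by
    cases subsingleton_or_nontrivial (Matrix n n ℝ)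
    · exact ⟨1, one_pos, (Subsingleton.elim _ _).le⟩
    have hY' := hY.isStrictlyPositive
    exact (CFC.exists_pos_algebraMap_le_iff hY'.isSelfAdjoint).2 fun _ ↦ hY'.spectrum_pos
  refine ⟨r, hr, fun x ↦ ?_⟩
  have := (Matrix.le_iff.mp hrY).dotProduct_mulVec_nonneg x
  rw [Algebra.algebraMap_eq_smul_one] at this
  simpa [sub_mulVec, smul_mulVec, dotProduct_smul] using this

theorem summable_fin_pi_prod_of_nonneg {β : Type*} :
    ∀ {n : ℕ} (f : Fin n → β → ℝ), (∀ i, 0 ≤ f i) → (∀ i, Summable (f i)) →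
      Summable fun x : Fin n → β ↦ ∏ i, f i (x i)
  | 0, _, _, _ => .of_finite
  | _ + 1, f, hf₀, hf => by
    have := (hf 0).mul_of_nonneg
      (summable_fin_pi_prod_of_nonneg (fun i ↦ f i.succ) (fun i ↦ hf₀ i.succ) fun i ↦ hf i.succ)
      (hf₀ 0) fun _ ↦ Finset.prod_nonneg fun i _ ↦ hf₀ i.succ _
    rw [← (Fin.consEquiv fun _ ↦ β).summable_iff]
    simpa [Function.comp_def, Fin.prod_univ_succ] using this

theorem summable_exp_neg_pi_mul_sq_add {t : ℝ} (ht : 0 < t) (α μ : ℝ) :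
    Summable fun k : ℤ ↦ rexp (-π * t * (k + α) ^ 2 - 2 * π * μ * (k + α)) := by
  have := ((summable_jacobiTheta₂_term_iff ((α * t + μ) * Complex.I) (t * Complex.I)).2
    (by simpa using ht)).norm.mul_left (rexp (-π * t * α ^ 2 - 2 * π * μ * α))
  refine this.congr fun k ↦ ?_
  rw [norm_jacobiTheta₂_term, ← Real.exp_add]
  congr 1
  simp only [Complex.mul_im, Complex.ofReal_re, Complex.I_im, mul_one, Complex.ofReal_im,
    Complex.I_re, mul_zero, add_zero, Complex.add_re, Complex.mul_re, sub_zero, Complex.add_im,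
    zero_mul]
  ring

theorem norm_cexp_quadratic {ι : Type*} [Fintype ι] (Ω : Matrix ι ι ℂ) (w : ι → ℂ)
    (x : ι → ℝ) :
    ‖Complex.exp (π * Complex.I * ((fun i ↦ (x i : ℂ)) ⬝ᵥ Ω *ᵥ fun i ↦ (x i : ℂ))
        + 2 * π * Complex.I * ((fun i ↦ (x i : ℂ)) ⬝ᵥ w))‖ =
      rexp (-π * (x ⬝ᵥ Ω.map Complex.im *ᵥ x) - 2 * π * (x ⬝ᵥ fun i ↦ (w i).im)) := by
  rw [Complex.norm_exp]
  simp only [dotProduct, mulVec, Complex.add_re, Complex.mul_re, Complex.ofReal_re,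
    Complex.I_re, mul_zero, Complex.ofReal_im, Complex.I_im, mul_one, sub_self, Complex.re_sum,
    sub_zero, Complex.im_sum, Complex.mul_im, zero_add, zero_mul, add_zero, zero_sub,
    Complex.re_ofNat, Complex.im_ofNat, map_apply, neg_mul, exp_eq_exp]
  ring

theorem norm_cexp_quadratic_le_prod {ι : Type*} [Fintype ι] {Ω : Matrix ι ι ℂ} {r : ℝ}
    (hr : ∀ x : ι → ℝ, r * (x ⬝ᵥ x) ≤ x ⬝ᵥ Ω.map Complex.im *ᵥ x) (w : ι → ℂ) (x : ι → ℝ) :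
    ‖Complex.exp (π * Complex.I * ((fun i ↦ (x i : ℂ)) ⬝ᵥ Ω *ᵥ fun i ↦ (x i : ℂ))
        + 2 * π * Complex.I * ((fun i ↦ (x i : ℂ)) ⬝ᵥ w))‖ ≤
      ∏ i, rexp (-π * r * x i ^ 2 - 2 * π * (w i).im * x i) := by
  rw [norm_cexp_quadratic, ← Real.exp_sum, exp_le_exp]
  calc -π * (x ⬝ᵥ Ω.map Complex.im *ᵥ x) - 2 * π * (x ⬝ᵥ fun i ↦ (w i).im)
      ≤ -π * (r * (x ⬝ᵥ x)) - 2 * π * (x ⬝ᵥ fun i ↦ (w i).im) := by nlinarith [pi_pos, hr x]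
    _ = ∑ i, (-π * r * x i ^ 2 - 2 * π * (w i).im * x i) := by
      simp only [dotProduct, Finset.mul_sum, ← Finset.sum_sub_distrib]
      exact Finset.sum_congr rfl fun i _ ↦ by ring

theorem thetaTerm_summable_norm_general (g : ℕ) (a b : Fin g → ℚ)
    (z : Fin g → ℂ) (Ω : Matrix (Fin g) (Fin g) ℂ) (hΩ : Ω ∈ SiegelUpperHalf g) :
    Summable (fun n : Fin g → ℤ => ‖thetaTerm g a b z Ω n‖) := by
  obtain ⟨r, hr, hrY⟩ := hΩ.2.exists_pos_mul_dotProduct_self_le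
  set gaussian : Fin g → ℤ → ℝ := fun i k ↦
    rexp (-π * r * (k + a i) ^ 2 - 2 * π * (z i + b i).im * (k + a i))
  have hbound (n : Fin g → ℤ) : ‖thetaTerm g a b z Ω n‖ ≤ ∏ i, gaussian i (n i) := by
    have := norm_cexp_quadratic_le_prod hrY (fun i ↦ z i + b i) fun i ↦ (n i + a i : ℝ)
    push_cast at this
    rwa [thetaTerm]
  refine .of_nonneg_of_le (fun _ ↦ norm_nonneg _) hbound ?_
  exact summable_fin_pi_prod_of_nonneg gaussian (fun _ _ ↦ (exp_pos _).le)
    fun i ↦ summable_exp_neg_pi_mul_sq_add hr _ _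

/-- The theta series is absolutely summable for `Ω` in the Siegel upper half-space. -/
theorem thetaTerm_summable_norm (g : ℕ) (hg : 1 ≤ g) (a b : Fin g → ℚ)
    (z : Fin g → ℂ) (Ω : Matrix (Fin g) (Fin g) ℂ) (hΩ : Ω ∈ SiegelUpperHalf g) :
    Summable (fun n : Fin g → ℤ => ‖thetaTerm g a b z Ω n‖) :=
  thetaTerm_summable_norm_general g a b z Ω hΩ
end

section
/- For every Ω ∈ H_2 the following three identities hold: θ₁(Ω/2)·(θ₀(Ω)² + θ₄(Ω)² + θ₈(Ω)² + θ₁₂(Ω)²) = (θ₁(Ω)² + θ₉(Ω)²)·θ₀(Ω/2); θ₂(Ω/2)·(θ₀(Ω)² + θ₄(Ω)² + θ₈(Ω)² + θ₁₂(Ω)²) = (θ₂(Ω)² + θ₆(Ω)²)·θ₀(Ω/2); and θ₃(Ω/2)·(θ₀(Ω)² + θ₄(Ω)² + θ₈(Ω)² + θ₁₂(Ω)²) = (θ₃(Ω)² + θ₁₅(Ω)²)·θ₀(Ω/2). (These are the identities b'₁ = (b₁+b₉)/(1+b₄+b₈+b₁₂), b'₂ = (b₂+b₆)/(1+b₄+b₈+b₁₂),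 b'₃ = (b₃+b₁₅)/(1+b₄+b₈+b₁₂) with denominators cleared, where b_i(Ω) = θ_i(Ω)²/θ₀(Ω)² and b'_i(Ω) = θ_i(Ω/2)/θ₀(Ω/2).) -/
open Matrix

/-- The genus-2 theta constant `θ_k` with `k = b₀ + 2b₁ + 4a₀ + 8a₁`,
i.e. `θ[a/2; b/2](0, Ω)` for `a, b ∈ {0,1}²`. -/
noncomputable def thetaConst (k : ℕ) (Ω : Matrix (Fin 2) (Fin 2) ℂ) : ℂ :=
  theta 2 ![((k / 4 % 2 : ℕ) : ℚ) / 2, ((k / 8 % 2 : ℕ) : ℚ) / 2]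
          ![((k % 2 : ℕ) : ℚ) / 2, ((k / 2 % 2 : ℕ) : ℚ) / 2] 0 Ω

/-! Expanding `θ[0; β](Ω/2) θ[0; β'](Ω/2)` as a double series over pairs `(m, n)` of integer
vectors and substituting `m = j + k + e`, `n = j - k`, where `e ∈ {0,1}^g` is the parity vector
of `m + n`, the parallelogram law for the quadratic form `Ω` turns it into
`∑ₑ θ[e/2; β + β'](Ω) θ[e/2; β - β'](Ω)`. In genus two with `β' = 0` this reads
`θₖ(Ω/2) θ₀(Ω/2) = θₖ² + θₖ₊₄² + θₖ₊₈² + θₖ₊₁₂²` for `k < 4`. The six odd theta constants on the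
right vanish, because `n ↦ -n - c` changes the sign of every term of `θ[c/2; d/2]` when `c ⬝ d`
is odd. The theorem is the case `k = 1, 2, 3` cross-multiplied with the case `k = 0`. -/

theorem summable_pi_prod_of_nonneg {ι α : Type*} [Fintype ι] {f : ι → α → ℝ}
    (hf₀ : ∀ i a, 0 ≤ f i a) (hf : ∀ i, Summable (f i)) :
    Summable fun x : ι → α => ∏ i, f i (x i) := by
  classical
  have hprod₀ (x : ι → α) : 0 ≤ ∏ i, f i (x i) := Finset.prod_nonneg fun i _ => hf₀ i (x i)
  refine summable_of_sum_le hprod₀ (c := ∏ i, ∑' a, f i a) fun u => ?_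
  calc ∑ x ∈ u, ∏ i, f i (x i)
      ≤ ∑ x ∈ Fintype.piFinset fun i => u.image (· i), ∏ i, f i (x i) :=
        Finset.sum_le_sum_of_subset_of_nonneg
          (fun x hx => Fintype.mem_piFinset.2 fun i => Finset.mem_image_of_mem _ hx)
          fun x _ _ => hprod₀ x
    _ = ∏ i, ∑ a ∈ u.image (· i), f i a := (Finset.prod_univ_sum _ _).symm
    _ ≤ ∏ i, ∑' a, f i a :=
        Finset.prod_le_prod (fun i _ => Finset.sum_nonneg fun a _ => hf₀ i a)
          fun i _ => (hf i).sum_le_tsum _ fun a _ => hf₀ i a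

theorem Matrix.PosDef.exists_pos_mul_sum_sq_le {ι : Type*} [Fintype ι] {Y : Matrix ι ι ℝ}
    (hY : Y.PosDef) : ∃ ε > 0, ∀ x : ι → ℝ, ε * ∑ i, x i ^ 2 ≤ x ⬝ᵥ Y *ᵥ x := by
  classical
  rcases isEmpty_or_nonempty ι with hι | hι
  · exact ⟨1, one_pos, fun x => by simp⟩
  set S := {x : ι → ℝ | ∑ i, x i ^ 2 = 1}
  have hS : IsCompact S := by
    refine Metric.isCompact_of_isClosed_isBounded (isClosed_eq (by fun_prop) continuous_const)
      ((Metric.isBounded_closedBall (x := 0) (r := 1)).subset fun x hx => ?_)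
    rw [mem_closedBall_zero_iff, pi_norm_le_iff_of_nonneg zero_le_one]
    intro i
    rw [Real.norm_eq_abs, ← sq_le_one_iff_abs_le_one, ← hx.out]
    exact Finset.single_le_sum (fun j _ => sq_nonneg (x j)) (Finset.mem_univ i)
  have hSne : S.Nonempty :=
    ⟨Pi.single (Classical.arbitrary ι) 1, by simp [S, Pi.single_apply, ite_pow]⟩
  obtain ⟨x₀, hx₀, hmin⟩ :=
    hS.exists_isMinOn hSne (f := fun x => x ⬝ᵥ Y *ᵥ x) (by fun_prop)
  have hx₀ne : x₀ ≠ 0 := by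
    rintro rfl
    simp [S] at hx₀
  refine ⟨x₀ ⬝ᵥ Y *ᵥ x₀, by simpa using hY.dotProduct_mulVec_pos hx₀ne, fun x => ?_⟩
  set s := ∑ i, x i ^ 2
  have hs₀ : 0 ≤ s := Finset.sum_nonneg fun i _ => sq_nonneg (x i)
  rcases hs₀.eq_or_lt with hs | hs
  · rw [← hs, mul_zero]
    simpa using hY.posSemidef.dotProduct_mulVec_nonneg x
  have hy : (Real.sqrt s)⁻¹ • x ∈ S := by
    simp only [S, Set.mem_ofPred_eq, Pi.smul_apply, smul_eq_mul, mul_pow, ← Finset.mul_sum]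
    rw [inv_pow, Real.sq_sqrt hs.le, inv_mul_cancel₀ hs.ne']
  have h := hmin hy
  simp only [Set.mem_ofPred_eq, mulVec_smul, dotProduct_smul, smul_dotProduct, smul_eq_mul] at h
  rwa [← mul_assoc, ← mul_inv, Real.mul_self_sqrt hs.le, inv_mul_eq_div, le_div_iff₀ hs] at h

theorem im_dotProduct_mulVec_ofReal {ι : Type*} [Fintype ι] (Ω : Matrix ι ι ℂ) (x : ι → ℝ) :
    ((fun i => (x i : ℂ)) ⬝ᵥ Ω *ᵥ fun i => (x i : ℂ)).im =
      x ⬝ᵥ (of fun i j => (Ω i j).im) *ᵥ x := by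
  simp [dotProduct, mulVec, Complex.im_sum, Finset.mul_sum]

theorem norm_thetaTerm {g : ℕ} (a b : Fin g → ℚ) (Ω : Matrix (Fin g) (Fin g) ℂ) (n : Fin g → ℤ) :
    ‖thetaTerm g a b 0 Ω n‖ = Real.exp (-Real.pi *
      ((fun i => (n i + a i : ℝ)) ⬝ᵥ (of fun i j => (Ω i j).im) *ᵥ fun i => (n i + a i : ℝ))) := by
  have hu : (fun i => (n i : ℂ) + (a i : ℂ)) = fun i => ((n i + a i : ℝ) : ℂ) := by
    ext i; push_cast; rfl
  rw [thetaTerm, Complex.norm_exp, hu, ← im_dotProduct_mulVec_ofReal]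
  simp [Complex.mul_re, dotProduct, Complex.im_sum]

theorem summable_norm_thetaTerm {g : ℕ} {Ω : Matrix (Fin g) (Fin g) ℂ}
    (hΩ : (of fun i j => (Ω i j).im).PosDef) (a b : Fin g → ℚ) :
    Summable fun n => ‖thetaTerm g a b 0 Ω n‖ := by
  obtain ⟨ε, hε, hY⟩ := hΩ.exists_pos_mul_sum_sq_le
  have hgauss (i : Fin g) : Summable fun m : ℤ => Real.exp (-Real.pi * (m + a i) ^ 2 * ε) := by
    refine (HurwitzKernelBounds.summable_f_int 0 (a i) hε).congr fun m => ?_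
    simp [HurwitzKernelBounds.f_int]
  refine (summable_pi_prod_of_nonneg (fun _ _ => (Real.exp_pos _).le) hgauss).of_nonneg_of_le
    (fun _ => norm_nonneg _) fun n => ?_
  rw [norm_thetaTerm, ← Real.exp_sum, Real.exp_le_exp]
  have := hY fun i => (n i + a i : ℝ)
  simp only [← Finset.sum_mul, ← Finset.mul_sum]
  nlinarith [Real.pi_pos]

theorem thetaTerm_mul_thetaTerm {g : ℕ} (Ω : Matrix (Fin g) (Fin g) ℂ) (c : Fin g → ℤ)
    (b b' : Fin g → ℚ) (j k : Fin g → ℤ) :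
    thetaTerm g (fun i => (c i : ℚ) / 2) b 0 Ω j * thetaTerm g (fun i => (c i : ℚ) / 2) b' 0 Ω k =
      thetaTerm g 0 (fun i => (b i + b' i) / 2) 0 ((2 : ℂ)⁻¹ • Ω) (j + k + c) *
        thetaTerm g 0 (fun i => (b i - b' i) / 2) 0 ((2 : ℂ)⁻¹ • Ω) (j - k) := by
  set u : Fin g → ℂ := fun i => j i + (c i : ℂ) / 2
  set v : Fin g → ℂ := fun i => k i + (c i : ℂ) / 2
  set β : Fin g → ℂ := fun i => b i
  set β' : Fin g → ℂ := fun i => b' i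
  have hu : (fun i => (j i : ℂ) + (((c i : ℚ) / 2 : ℚ) : ℂ)) = u := by ext; push_cast; rfl
  have hv : (fun i => (k i : ℂ) + (((c i : ℚ) / 2 : ℚ) : ℂ)) = v := by ext; push_cast; rfl
  have hadd : (fun i => ((j + k + c) i : ℂ) + ((0 : Fin g → ℚ) i : ℂ)) = u + v := by
    ext; simp [u, v]; ring
  have hsub : (fun i => ((j - k) i : ℂ) + ((0 : Fin g → ℚ) i : ℂ)) = u - v := by
    ext; simp [u, v]
  have hβ : (fun i => (0 : Fin g → ℂ) i + (b i : ℂ)) = β := by ext; simp [β]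
  have hβ' : (fun i => (0 : Fin g → ℂ) i + (b' i : ℂ)) = β' := by ext; simp [β']
  have hβadd :
      (fun i => (0 : Fin g → ℂ) i + (((b i + b' i) / 2 : ℚ) : ℂ)) = (2 : ℂ)⁻¹ • (β + β') := by
    ext; simp [β, β']; ring
  have hβsub :
      (fun i => (0 : Fin g → ℂ) i + (((b i - b' i) / 2 : ℚ) : ℂ)) = (2 : ℂ)⁻¹ • (β - β') := by
    ext; simp [β, β']; ring
  simp only [thetaTerm, ← Complex.exp_add]
  rw [hu, hv, hadd, hsub, hβ, hβ', hβadd, hβsub]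
  congr 1
  simp only [add_dotProduct, dotProduct_add, sub_dotProduct, dotProduct_sub, mulVec_add,
    mulVec_sub, smul_mulVec, dotProduct_smul, smul_eq_mul]
  ring

theorem theta_eq_zero_of_odd {g : ℕ} (Ω : Matrix (Fin g) (Fin g) ℂ) {c d : Fin g → ℤ}
    (hcd : Odd (c ⬝ᵥ d)) :
    theta g (fun i => (c i : ℚ) / 2) (fun i => (d i : ℚ) / 2) 0 Ω = 0 := by
  obtain ⟨t, ht⟩ := hcd
  set f := thetaTerm g (fun i => (c i : ℚ) / 2) (fun i => (d i : ℚ) / 2) 0 Ω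
  have hf (n : Fin g → ℤ) : f (-n - c) = -f n := by
    set w : Fin g → ℂ := fun i => n i + (c i : ℂ) / 2
    have hw : (fun i => (n i : ℂ) + (((c i : ℚ) / 2 : ℚ) : ℂ)) = w := by ext; push_cast; rfl
    have hw' : (fun i => ((-n - c) i : ℂ) + (((c i : ℚ) / 2 : ℚ) : ℂ)) = -w := by
      ext; simp [w]; ring
    have hwd : w ⬝ᵥ (fun i => (0 : Fin g → ℂ) i + (((d i : ℚ) / 2 : ℚ) : ℂ)) =
        (n ⬝ᵥ d : ℤ) / 2 + (2 * t + 1 : ℤ) / 4 := by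
      rw [← ht]
      simp only [w, dotProduct, Pi.zero_apply, zero_add, push_cast, Finset.sum_div,
        ← Finset.sum_add_distrib]
      exact Finset.sum_congr rfl fun i _ => by ring
    simp only [f, thetaTerm]
    rw [hw, hw', neg_dotProduct, mulVec_neg, dotProduct_neg, neg_neg, neg_dotProduct, hwd,
      ← Complex.exp_add_pi_mul_I, Complex.exp_eq_exp_iff_exists_int]
    exact ⟨-(n ⬝ᵥ d) - t - 1, by push_cast; ring⟩
  let σ : Equiv.Perm (Fin g → ℤ) :=
    Function.Involutive.toPerm (fun n => -n - c) fun n => by ext i; simp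
  have : ∑' n, f n = -∑' n, f n := by
    calc ∑' n, f n = ∑' n, f (σ n) := (σ.tsum_eq f).symm
      _ = ∑' n, -f n := tsum_congr hf
      _ = -∑' n, f n := tsum_neg
  rw [theta]
  linear_combination this / 2

def sumDiffEquiv (ι : Type*) : (ι → Fin 2) × (ι → ℤ) × (ι → ℤ) ≃ (ι → ℤ) × (ι → ℤ) where
  toFun p := (p.2.1 + p.2.2 + fun i => (p.1 i : ℤ), p.2.1 - p.2.2)
  invFun q := (fun i => ⟨((q.1 i + q.2 i) % 2).toNat, by omega⟩,
    fun i => (q.1 i + q.2 i) / 2, fun i => (q.1 i - q.2 i) / 2)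
  left_inv := by
    rintro ⟨e, j, k⟩
    refine Prod.ext (funext fun i => Fin.ext ?_)
      (Prod.ext (funext fun i => ?_) (funext fun i => ?_))
    all_goals simp only [Pi.add_apply, Pi.sub_apply]; omega
  right_inv := by
    rintro ⟨m, n⟩
    refine Prod.ext (funext fun i => ?_) (funext fun i => ?_)
    all_goals simp only [Pi.add_apply, Pi.sub_apply]; omega

theorem posDef_im_ofReal_smul {ι : Type*} [Fintype ι] {Ω : Matrix ι ι ℂ}
    (hΩ : (of fun i j => (Ω i j).im).PosDef) {r : ℝ} (hr : 0 < r) :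
    (of fun i j => (((r : ℂ) • Ω) i j).im).PosDef := by
  have : (of fun i j => (((r : ℂ) • Ω) i j).im) = r • of fun i j => (Ω i j).im := by
    ext; simp
  exact this ▸ hΩ.smul hr

theorem theta_half_mul_theta_half {g : ℕ} {Ω : Matrix (Fin g) (Fin g) ℂ}
    (hΩ : (of fun i j => (Ω i j).im).PosDef) (b b' : Fin g → ℚ) :
    theta g 0 (fun i => (b i + b' i) / 2) 0 ((2 : ℂ)⁻¹ • Ω) *
        theta g 0 (fun i => (b i - b' i) / 2) 0 ((2 : ℂ)⁻¹ • Ω) =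
      ∑ e : Fin g → Fin 2, theta g (fun i => ((e i : ℤ) : ℚ) / 2) b 0 Ω *
        theta g (fun i => ((e i : ℤ) : ℚ) / 2) b' 0 Ω := by
  have hΩ' : (of fun i j => (((2 : ℂ)⁻¹ • Ω) i j).im).PosDef := by
    simpa using posDef_im_ofReal_smul hΩ (r := 2⁻¹) (by norm_num)
  set F : (Fin g → ℤ) × (Fin g → ℤ) → ℂ := fun q =>
    thetaTerm g 0 (fun i => (b i + b' i) / 2) 0 ((2 : ℂ)⁻¹ • Ω) q.1 *
      thetaTerm g 0 (fun i => (b i - b' i) / 2) 0 ((2 : ℂ)⁻¹ • Ω) q.2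
  have hF : Summable F := summable_mul_of_summable_norm
    (summable_norm_thetaTerm hΩ' _ _) (summable_norm_thetaTerm hΩ' _ _)
  calc _ = ∑' q, F q := tsum_mul_tsum_of_summable_norm
          (summable_norm_thetaTerm hΩ' _ _) (summable_norm_thetaTerm hΩ' _ _)
    _ = ∑' p, F (sumDiffEquiv _ p) := ((sumDiffEquiv _).tsum_eq F).symm
    _ = ∑' (e) (jk), F (sumDiffEquiv _ (e, jk)) :=
        ((sumDiffEquiv _).summable_iff.2 hF).tsum_prod
    _ = ∑ e, ∑' jk, F (sumDiffEquiv _ (e, jk)) := tsum_fintype _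
    _ = _ := Finset.sum_congr rfl fun e _ => by
        rw [theta, theta, tsum_mul_tsum_of_summable_norm (summable_norm_thetaTerm hΩ _ _)
          (summable_norm_thetaTerm hΩ _ _)]
        exact tsum_congr fun jk => (thetaTerm_mul_thetaTerm Ω _ b b' jk.1 jk.2).symm

theorem thetaConst_eq_zero_of_odd {k : ℕ}
    (hk : Odd (k / 4 % 2 * (k % 2) + k / 8 % 2 * (k / 2 % 2))) (Ω : Matrix (Fin 2) (Fin 2) ℂ) :
    thetaConst k Ω = 0 := by
  have hcd : Odd (![((k / 4 % 2 : ℕ) : ℤ), (k / 8 % 2 : ℕ)] ⬝ᵥ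
      ![((k % 2 : ℕ) : ℤ), (k / 2 % 2 : ℕ)]) := by
    simpa [dotProduct, Fin.sum_univ_two] using (Int.odd_coe_nat _).2 hk
  rw [thetaConst, ← theta_eq_zero_of_odd Ω hcd]
  congr 1 <;> funext i <;> fin_cases i <;>
    simp only [Fin.zero_eta, Fin.mk_one, cons_val_zero, cons_val_one, Int.cast_natCast]

theorem sum_fin_two_arrow_fin_two {M : Type*} [AddCommMonoid M] (f : (Fin 2 → Fin 2) → M) :
    ∑ e, f e = f ![0, 0] + f ![1, 0] + f ![0, 1] + f ![1, 1] := by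
  rw [← (piFinTwoEquiv fun _ => Fin 2).symm.sum_comp, Fintype.sum_prod_type]
  simp [Fin.sum_univ_two]
  abel

theorem thetaConst_half_mul_thetaConst_half {Ω : Matrix (Fin 2) (Fin 2) ℂ}
    (hΩ : (of fun i j => (Ω i j).im).PosDef) {k : ℕ} (hk : k < 4) :
    thetaConst k ((2 : ℂ)⁻¹ • Ω) * thetaConst 0 ((2 : ℂ)⁻¹ • Ω) =
      thetaConst k Ω ^ 2 + thetaConst (k + 4) Ω ^ 2 + thetaConst (k + 8) Ω ^ 2 +
        thetaConst (k + 12) Ω ^ 2 := by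
  set β : Fin 2 → ℚ := ![((k % 2 : ℕ) : ℚ) / 2, ((k / 2 % 2 : ℕ) : ℚ) / 2]
  have hchar (e : Fin 2 → Fin 2) (M : Matrix (Fin 2) (Fin 2) ℂ) :
      theta 2 (fun i => ((e i : ℤ) : ℚ) / 2) β 0 M = thetaConst (k + 4 * (e 0 + 2 * e 1)) M := by
    rw [thetaConst]
    congr 1 <;> funext i <;> fin_cases i <;> simp [β] <;> omega
  convert theta_half_mul_theta_half hΩ β β using 1
  · have hk0 := hchar 0 ((2 : ℂ)⁻¹ • Ω)
    simp only [Pi.zero_apply, Fin.val_zero, mul_zero, add_zero] at hk0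
    rw [← hk0, thetaConst]
    congr 2 <;> funext i <;> fin_cases i <;> simp
  · simp only [sum_fin_two_arrow_fin_two, ← sq, hchar]
    norm_num

/-- The identities `b'ᵢ = (bᵢ + b_{σ(i)})/(1 + b₄ + b₈ + b₁₂)` with denominators cleared,
where `bᵢ(Ω) = θᵢ(Ω)²/θ₀(Ω)²` and `b'ᵢ(Ω) = θᵢ(Ω/2)/θ₀(Ω/2)`. -/
theorem bprime_in_terms_of_b (Ω : Matrix (Fin 2) (Fin 2) ℂ)
    (hΩ : Ω ∈ SiegelUpperHalf 2) :
    thetaConst 1 ((2 : ℂ)⁻¹ • Ω) *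
        (thetaConst 0 Ω ^ 2 + thetaConst 4 Ω ^ 2 + thetaConst 8 Ω ^ 2 +
          thetaConst 12 Ω ^ 2) =
      (thetaConst 1 Ω ^ 2 + thetaConst 9 Ω ^ 2) * thetaConst 0 ((2 : ℂ)⁻¹ • Ω) ∧
    thetaConst 2 ((2 : ℂ)⁻¹ • Ω) *
        (thetaConst 0 Ω ^ 2 + thetaConst 4 Ω ^ 2 + thetaConst 8 Ω ^ 2 +
          thetaConst 12 Ω ^ 2) =
      (thetaConst 2 Ω ^ 2 + thetaConst 6 Ω ^ 2) * thetaConst 0 ((2 : ℂ)⁻¹ • Ω) ∧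
    thetaConst 3 ((2 : ℂ)⁻¹ • Ω) *
        (thetaConst 0 Ω ^ 2 + thetaConst 4 Ω ^ 2 + thetaConst 8 Ω ^ 2 +
          thetaConst 12 Ω ^ 2) =
      (thetaConst 3 Ω ^ 2 + thetaConst 15 Ω ^ 2) * thetaConst 0 ((2 : ℂ)⁻¹ • Ω) := by
  have h0 := thetaConst_half_mul_thetaConst_half hΩ.2 (k := 0) (by norm_num)
  have h1 := thetaConst_half_mul_thetaConst_half hΩ.2 (k := 1) (by norm_num)
  have h2 := thetaConst_half_mul_thetaConst_half hΩ.2 (k := 2) (by norm_num)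
  have h3 := thetaConst_half_mul_thetaConst_half hΩ.2 (k := 3) (by norm_num)
  set Ω' := (2 : ℂ)⁻¹ • Ω
  norm_num only at h0 h1 h2 h3
  simp only [thetaConst_eq_zero_of_odd (k := 5) (by decide),
    thetaConst_eq_zero_of_odd (k := 13) (by decide),
    thetaConst_eq_zero_of_odd (k := 10) (by decide),
    thetaConst_eq_zero_of_odd (k := 14) (by decide),
    thetaConst_eq_zero_of_odd (k := 7) (by decide),
    thetaConst_eq_zero_of_odd (k := 11) (by decide)] at h1 h2 h3
  refine ⟨?_, ?_, ?_⟩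
  · linear_combination thetaConst 0 Ω' * h1 - thetaConst 1 Ω' * h0
  · linear_combination thetaConst 0 Ω' * h2 - thetaConst 2 Ω' * h0
  · linear_combination thetaConst 0 Ω' * h3 - thetaConst 3 Ω' * h0
end

section
/- For every odd prime p, one has 12·∑_{k=1}^{p−1} σ₁(k)·σ₁(p−k) = 5p³ − 6p² − 5p + 6. -/
/-- `σ₁(n)`, the sum of the positive divisors of `n`. -/
def sigma1 (n : ℕ) : ℕ := ∑ d ∈ n.divisors, d

open Finset

def QS (n : ℕ) : Finset (ℕ × ℕ × ℕ × ℕ) :=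
  ((range (n+1)) ×ˢ (range (n+1)) ×ˢ (range (n+1)) ×ˢ (range (n+1))).filter
    (fun q => 0 < q.1 ∧ 0 < q.2.1 ∧ 0 < q.2.2.1 ∧ 0 < q.2.2.2 ∧
      q.1 * q.2.2.1 + q.2.1 * q.2.2.2 = n)

lemma mem_QS {n : ℕ} {q : ℕ × ℕ × ℕ × ℕ} :
    q ∈ QS n ↔ 0 < q.1 ∧ 0 < q.2.1 ∧ 0 < q.2.2.1 ∧ 0 < q.2.2.2 ∧
      q.1 * q.2.2.1 + q.2.1 * q.2.2.2 = n := by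
  obtain ⟨a, b, x, y⟩ := q
  simp only [QS, mem_filter, mem_product, mem_range]
  constructor
  · rintro ⟨-, h⟩; exact h
  · rintro ⟨ha, hb, hx, hy, he⟩
    refine ⟨⟨?_, ?_, ?_, ?_⟩, ha, hb, hx, hy, he⟩ <;>
    · simp only [Nat.lt_succ_iff]
      nlinarith

/-- Liouville bijection: `{y < x} → {a < b}`, `(a,b,x,y) ↦ (a, a+b, x-y, y)`. -/
lemma bij1 (n : ℕ) (F : ℕ → ℕ → ℤ) :
    ∑ q ∈ (QS n).filter (fun q => q.2.2.2 < q.2.2.1), F q.1 q.2.1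
      = ∑ q ∈ (QS n).filter (fun q => q.1 < q.2.1), F q.1 (q.2.1 - q.1) := by
  apply Finset.sum_nbij' (i := fun q => (q.1, q.1 + q.2.1, q.2.2.1 - q.2.2.2, q.2.2.2))
    (j := fun q => (q.1, q.2.1 - q.1, q.2.2.1 + q.2.2.2, q.2.2.2))
  · rintro ⟨a, b, x, y⟩ hq
    simp only [mem_filter, mem_QS] at hq ⊢
    obtain ⟨⟨ha, hb, hx, hy, he⟩, hyx⟩ := hq
    have h2 : y ≤ x := hyx.le
    refine ⟨⟨ha, by omega, by omega, hy, ?_⟩, by omega⟩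
    have he' : (a : ℤ) * x + b * y = n := by exact_mod_cast he
    zify [h2]
    linear_combination he'
  · rintro ⟨a, b, x, y⟩ hq
    simp only [mem_filter, mem_QS] at hq ⊢
    obtain ⟨⟨ha, hb, hx, hy, he⟩, hab⟩ := hq
    have h2 : a ≤ b := hab.le
    refine ⟨⟨ha, by omega, by omega, hy, ?_⟩, by omega⟩
    have he' : (a : ℤ) * x + b * y = n := by exact_mod_cast he
    zify [h2]
    linear_combination he'
  · rintro ⟨a, b, x, y⟩ hq
    simp only [mem_filter, mem_QS] at hq
    obtain ⟨⟨ha, hb, hx, hy, he⟩, hyx⟩ := hq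
    dsimp only
    simp only [Prod.mk.injEq, and_true, true_and, eq_self_iff_true]
    omega
  · rintro ⟨a, b, x, y⟩ hq
    simp only [mem_filter, mem_QS] at hq
    obtain ⟨⟨ha, hb, hx, hy, he⟩, hab⟩ := hq
    dsimp only
    simp only [Prod.mk.injEq, and_true, true_and, eq_self_iff_true]
    omega
  · rintro ⟨a, b, x, y⟩ hq
    simp only [mem_filter, mem_QS] at hq
    dsimp only
    congr 1
    omega

/-- `{x < y} → {a < b}`, `(a,b,x,y) ↦ (b, a+b, y-x, x)`. -/
lemma bij2 (n : ℕ) (F : ℕ → ℕ → ℤ) :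
    ∑ q ∈ (QS n).filter (fun q => q.2.2.1 < q.2.2.2), F q.1 q.2.1
      = ∑ q ∈ (QS n).filter (fun q => q.1 < q.2.1), F (q.2.1 - q.1) q.1 := by
  apply Finset.sum_nbij' (i := fun q => (q.2.1, q.1 + q.2.1, q.2.2.2 - q.2.2.1, q.2.2.1))
    (j := fun q => (q.2.1 - q.1, q.1, q.2.2.2, q.2.2.1 + q.2.2.2))
  · rintro ⟨a, b, x, y⟩ hq
    simp only [mem_filter, mem_QS] at hq ⊢
    obtain ⟨⟨ha, hb, hx, hy, he⟩, hxy⟩ := hq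
    have h2 : x ≤ y := hxy.le
    refine ⟨⟨hb, by omega, by omega, hx, ?_⟩, by omega⟩
    have he' : (a : ℤ) * x + b * y = n := by exact_mod_cast he
    zify [h2]
    linear_combination he'
  · rintro ⟨a, b, x, y⟩ hq
    simp only [mem_filter, mem_QS] at hq ⊢
    obtain ⟨⟨ha, hb, hx, hy, he⟩, hab⟩ := hq
    have h2 : a ≤ b := hab.le
    refine ⟨⟨by omega, ha, hy, by omega, ?_⟩, by omega⟩
    have he' : (a : ℤ) * x + b * y = n := by exact_mod_cast he
    zify [h2]
    linear_combination he'
  · rintro ⟨a, b, x, y⟩ hq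
    simp only [mem_filter, mem_QS] at hq
    obtain ⟨⟨ha, hb, hx, hy, he⟩, hxy⟩ := hq
    dsimp only
    simp only [Prod.mk.injEq, and_true, true_and, eq_self_iff_true]
    omega
  · rintro ⟨a, b, x, y⟩ hq
    simp only [mem_filter, mem_QS] at hq
    obtain ⟨⟨ha, hb, hx, hy, he⟩, hab⟩ := hq
    dsimp only
    simp only [Prod.mk.injEq, and_true, true_and, eq_self_iff_true]
    omega
  · rintro ⟨a, b, x, y⟩ hq
    simp only [mem_filter, mem_QS] at hq
    dsimp only
    congr 1
    omega

/-- diagonal `x = y`: parametrized by `e ∣ n`, `e = a + b`, `a ∈ [1, e-1]`. -/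
lemma bij3 (n : ℕ) (G : ℕ × ℕ × ℕ × ℕ → ℤ) :
    ∑ q ∈ (QS n).filter (fun q => q.2.2.1 = q.2.2.2), G q
      = ∑ e ∈ n.divisors, ∑ a ∈ Icc 1 (e - 1), G (a, e - a, n / e, n / e) := by
  rw [← Finset.sum_sigma (n.divisors) (fun e => Icc 1 (e - 1))
      (fun s => G (s.2, s.1 - s.2, n / s.1, n / s.1))]
  apply Finset.sum_nbij' (i := fun q => (⟨q.1 + q.2.1, q.1⟩ : (_ : ℕ) × ℕ))
    (j := fun s => (s.2, s.1 - s.2, n / s.1, n / s.1))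
  · rintro ⟨a, b, x, y⟩ hq
    simp only [mem_filter, mem_QS] at hq
    obtain ⟨⟨ha, hb, hx, hy, he⟩, hxy⟩ := hq
    subst hxy
    have hd : (a + b) * x = n := by rw [add_mul]; exact he
    simp only [Finset.mem_sigma, Nat.mem_divisors, Finset.mem_Icc]
    have hpos : 0 < a * x := Nat.mul_pos ha hx
    exact ⟨⟨⟨x, hd.symm⟩, by omega⟩, by omega, by omega⟩
  · rintro ⟨e, a⟩ hs
    simp only [Finset.mem_sigma, Nat.mem_divisors, Finset.mem_Icc] at hs
    obtain ⟨⟨⟨x, hx⟩, hn0⟩, h1, h2⟩ := hs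
    simp only [mem_filter, mem_QS]
    have he2 : 2 ≤ e := by omega
    have hxpos : 0 < n / e := Nat.div_pos (Nat.le_of_dvd (Nat.pos_of_ne_zero hn0) ⟨x, hx⟩)
      (by omega)
    refine ⟨⟨by omega, by omega, hxpos, hxpos, ?_⟩, trivial⟩
    have : a * (n / e) + (e - a) * (n / e) = (a + (e - a)) * (n / e) := by ring
    rw [this]
    have : a + (e - a) = e := by omega
    rw [this]
    exact Nat.mul_div_cancel' ⟨x, hx⟩
  · rintro ⟨a, b, x, y⟩ hq
    simp only [mem_filter, mem_QS] at hq
    obtain ⟨⟨ha, hb, hx, hy, he⟩, hxy⟩ := hq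
    subst hxy
    have hd : (a + b) * x = n := by rw [add_mul]; exact he
    dsimp only
    have h1 : a + b - a = b := by omega
    have h2 : n / (a + b) = x := by
      rw [← hd]; exact Nat.mul_div_cancel_left x (by omega)
    rw [h1, h2]
  · rintro ⟨e, a⟩ hs
    simp only [Finset.mem_sigma, Nat.mem_divisors, Finset.mem_Icc] at hs
    obtain ⟨⟨hd, hn0⟩, h1, h2⟩ := hs
    dsimp only
    have h3 : a + (e - a) = e := by omega
    simp only [h3]
  · rintro ⟨a, b, x, y⟩ hq
    simp only [mem_filter, mem_QS] at hq
    obtain ⟨⟨ha, hb, hx, hy, he⟩, hxy⟩ := hq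
    subst hxy
    have hd : (a + b) * x = n := by rw [add_mul]; exact he
    dsimp only
    have h1 : a + b - a = b := by omega
    have h2 : n / (a + b) = x := by
      rw [← hd]; exact Nat.mul_div_cancel_left x (by omega)
    rw [h1, h2]

/-- trisect a sum along comparison of two coordinates -/
lemma trisect {α : Type*} [DecidableEq α] (s : Finset α) (f g : α → ℕ) (G : α → ℤ) :
    ∑ q ∈ s, G q =
      ∑ q ∈ s.filter (fun q => g q < f q), G q +
      (∑ q ∈ s.filter (fun q => f q < g q), G q +
       ∑ q ∈ s.filter (fun q => f q = g q), G q) := by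
  rw [← Finset.sum_filter_add_sum_filter_not s (fun q => g q < f q) G]
  congr 1
  rw [← Finset.sum_filter_add_sum_filter_not (s.filter (fun q => ¬ g q < f q))
    (fun q => f q < g q) G, Finset.filter_filter, Finset.filter_filter]
  congr 1
  · apply Finset.sum_congr _ (fun _ _ => rfl)
    apply Finset.filter_congr
    intro q _
    omega
  · apply Finset.sum_congr _ (fun _ _ => rfl)
    apply Finset.filter_congr
    intro q _
    omega

/-- swap the two pairs on the full set -/
lemma swapQ (n : ℕ) (G : ℕ × ℕ × ℕ × ℕ → ℤ) :
    ∑ q ∈ QS n, G q = ∑ q ∈ QS n, G (q.2.1, q.1, q.2.2.2, q.2.2.1) := by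
  apply Finset.sum_nbij' (i := fun q => (q.2.1, q.1, q.2.2.2, q.2.2.1))
    (j := fun q => (q.2.1, q.1, q.2.2.2, q.2.2.1))
  · rintro ⟨a, b, x, y⟩ hq
    simp only [mem_QS] at hq ⊢
    exact ⟨hq.2.1, hq.1, hq.2.2.2.1, hq.2.2.1, by omega⟩
  · rintro ⟨a, b, x, y⟩ hq
    simp only [mem_QS] at hq ⊢
    exact ⟨hq.2.1, hq.1, hq.2.2.2.1, hq.2.2.1, by omega⟩
  · rintro ⟨a, b, x, y⟩ _; rfl
  · rintro ⟨a, b, x, y⟩ _; rfl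
  · rintro ⟨a, b, x, y⟩ _; rfl

/-- swap the two pairs, region version: `{b < a} → {a < b}` -/
lemma swapR (n : ℕ) (F : ℕ → ℕ → ℤ) :
    ∑ q ∈ (QS n).filter (fun q => q.2.1 < q.1), F q.1 q.2.1
      = ∑ q ∈ (QS n).filter (fun q => q.1 < q.2.1), F q.2.1 q.1 := by
  apply Finset.sum_nbij' (i := fun q => (q.2.1, q.1, q.2.2.2, q.2.2.1))
    (j := fun q => (q.2.1, q.1, q.2.2.2, q.2.2.1))
  · rintro ⟨a, b, x, y⟩ hq
    simp only [mem_filter, mem_QS] at hq ⊢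
    obtain ⟨⟨ha, hb, hx, hy, he⟩, hba⟩ := hq
    exact ⟨⟨hb, ha, hy, hx, by omega⟩, hba⟩
  · rintro ⟨a, b, x, y⟩ hq
    simp only [mem_filter, mem_QS] at hq ⊢
    obtain ⟨⟨ha, hb, hx, hy, he⟩, hab⟩ := hq
    exact ⟨⟨hb, ha, hy, hx, by omega⟩, hab⟩
  · rintro ⟨a, b, x, y⟩ _; rfl
  · rintro ⟨a, b, x, y⟩ _; rfl
  · rintro ⟨a, b, x, y⟩ _; rfl

/-- swap `(a,x)` with `(b,y)`… no: swap pair roles `(a,b,x,y) ↦ (x,y,a,b)`,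
mapping the diagonal `a = b` to the diagonal `x = y`. -/
lemma swapT (n : ℕ) (G : ℕ × ℕ × ℕ × ℕ → ℤ) :
    ∑ q ∈ (QS n).filter (fun q => q.1 = q.2.1), G q
      = ∑ q ∈ (QS n).filter (fun q => q.2.2.1 = q.2.2.2),
          G (q.2.2.1, q.2.2.2, q.1, q.2.1) := by
  apply Finset.sum_nbij' (i := fun q => (q.2.2.1, q.2.2.2, q.1, q.2.1))
    (j := fun q => (q.2.2.1, q.2.2.2, q.1, q.2.1))
  · rintro ⟨a, b, x, y⟩ hq
    simp only [mem_filter, mem_QS] at hq ⊢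
    obtain ⟨⟨ha, hb, hx, hy, he⟩, hab⟩ := hq
    refine ⟨⟨hx, hy, ha, hb, by rw [mul_comm x a, mul_comm y b]; exact he⟩, ?_⟩
    simpa using hab
  · rintro ⟨a, b, x, y⟩ hq
    simp only [mem_filter, mem_QS] at hq ⊢
    obtain ⟨⟨ha, hb, hx, hy, he⟩, hxy⟩ := hq
    refine ⟨⟨hx, hy, ha, hb, by rw [mul_comm x a, mul_comm y b]; exact he⟩, ?_⟩
    simpa using hxy
  · rintro ⟨a, b, x, y⟩ _; rfl
  · rintro ⟨a, b, x, y⟩ _; rfl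
  · rintro ⟨a, b, x, y⟩ _; rfl

lemma sigDA (k : ℕ) :
    ∑ r ∈ k.divisorsAntidiagonal, (r.1 : ℤ) = (sigma1 k : ℤ) := by
  rw [Nat.sum_divisorsAntidiagonal (fun a _ => (a : ℤ))]
  simp [sigma1]

lemma convQ (n : ℕ) :
    ∑ q ∈ QS n, ((q.1 : ℤ) * (q.2.1 : ℤ)) =
      ∑ k ∈ Icc 1 (n - 1), (sigma1 k : ℤ) * (sigma1 (n - k) : ℤ) := by
  have key : ∑ q ∈ QS n, ((q.1 : ℤ) * (q.2.1 : ℤ)) =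
      ∑ s ∈ (Icc 1 (n - 1)).sigma
        (fun k => k.divisorsAntidiagonal ×ˢ (n - k).divisorsAntidiagonal),
        ((s.2.1.1 : ℤ) * (s.2.2.1 : ℤ)) := by
    apply Finset.sum_nbij'
      (i := fun q => (⟨q.1 * q.2.2.1, ((q.1, q.2.2.1), (q.2.1, q.2.2.2))⟩ :
        (_ : ℕ) × ((ℕ × ℕ) × (ℕ × ℕ))))
      (j := fun s => (s.2.1.1, s.2.2.1, s.2.1.2, s.2.2.2))
      ?hi ?hj ?li ?ri ?val
    case hi =>
      rintro ⟨a, b, x, y⟩ hq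
      simp only [mem_QS] at hq
      obtain ⟨ha, hb, hx, hy, he⟩ := hq
      have h1 : 0 < a * x := Nat.mul_pos ha hx
      have h2 : 0 < b * y := Nat.mul_pos hb hy
      simp only [Finset.mem_sigma, Finset.mem_product, Nat.mem_divisorsAntidiagonal,
        Finset.mem_Icc]
      exact ⟨⟨by omega, by omega⟩, ⟨trivial, by omega⟩, by omega, by omega⟩
    case hj =>
      rintro ⟨k, ⟨a, x⟩, ⟨b, y⟩⟩ hs
      simp only [Finset.mem_sigma, Finset.mem_product, Nat.mem_divisorsAntidiagonal,
        Finset.mem_Icc] at hs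
      obtain ⟨⟨hk1, hk2⟩, ⟨hax, hk0⟩, hby, hnk0⟩ := hs
      simp only [mem_QS]
      have h1 : 0 < a * x := by omega
      have h2 : 0 < b * y := by omega
      have ha : 0 < a := Nat.pos_of_ne_zero (by rintro rfl; simp at h1)
      have hx : 0 < x := Nat.pos_of_ne_zero (by rintro rfl; simp at h1)
      have hb : 0 < b := Nat.pos_of_ne_zero (by rintro rfl; simp at h2)
      have hy : 0 < y := Nat.pos_of_ne_zero (by rintro rfl; simp at h2)
      exact ⟨ha, hb, hx, hy, by omega⟩
    case li => rintro ⟨a, b, x, y⟩ _; rfl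
    case ri =>
      rintro ⟨k, ⟨a, x⟩, ⟨b, y⟩⟩ hs
      simp only [Finset.mem_sigma, Finset.mem_product, Nat.mem_divisorsAntidiagonal,
        Finset.mem_Icc] at hs
      obtain ⟨⟨hk1, hk2⟩, ⟨hax, hk0⟩, hby, hnk0⟩ := hs
      dsimp only
      simp only [hax]
    case val => rintro ⟨a, b, x, y⟩ _; rfl
  rw [key, Finset.sum_sigma]
  apply Finset.sum_congr rfl
  intro k _
  rw [Finset.sum_product, ← sigDA k, ← sigDA (n - k), Finset.sum_mul_sum]

/-- Master Liouville identity. -/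
lemma master (n : ℕ) (F : ℕ → ℕ → ℤ) :
    ∑ q ∈ QS n, F q.1 q.2.1 =
      (∑ q ∈ (QS n).filter (fun q => q.1 < q.2.1),
        (F q.1 (q.2.1 - q.1) + F (q.2.1 - q.1) q.1))
      + ∑ e ∈ n.divisors, ∑ a ∈ Icc 1 (e - 1), F a (e - a) := by
  rw [trisect (QS n) (fun q => q.2.2.1) (fun q => q.2.2.2) (fun q => F q.1 q.2.1)]
  rw [bij1, bij2, bij3 n (fun q => F q.1 q.2.1), Finset.sum_add_distrib]
  beta_reduce
  ring

/-- Decomposition along the comparison of `a` and `b`. -/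
lemma decomp (n : ℕ) (F : ℕ → ℕ → ℤ) :
    ∑ q ∈ QS n, F q.1 q.2.1 =
      (∑ q ∈ (QS n).filter (fun q => q.1 < q.2.1), F q.2.1 q.1
      + ∑ q ∈ (QS n).filter (fun q => q.1 < q.2.1), F q.1 q.2.1)
      + ∑ e ∈ n.divisors, ∑ x ∈ Icc 1 (e - 1), F (n / e) (n / e) := by
  rw [trisect (QS n) (fun q => q.1) (fun q => q.2.1) (fun q => F q.1 q.2.1)]
  rw [swapR, swapT n (fun q => F q.1 q.2.1), bij3 n (fun q => F q.2.2.1 q.2.2.2)]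
  beta_reduce
  ring

lemma gauss1 (m : ℕ) : 2 * ∑ a ∈ Icc 1 m, (a : ℤ) = m * (m + 1) := by
  induction m with
  | zero => simp
  | succ k ih =>
    rw [Finset.sum_Icc_succ_top (by omega : 1 ≤ k + 1)]
    push_cast
    push_cast at ih
    linarith

lemma gauss2 (m : ℕ) : 6 * ∑ a ∈ Icc 1 m, (a : ℤ) ^ 2 = m * (m + 1) * (2 * m + 1) := by
  induction m with
  | zero => simp
  | succ k ih =>
    rw [Finset.sum_Icc_succ_top (by omega : 1 ≤ k + 1)]
    push_cast
    push_cast at ih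
    ring_nf
    ring_nf at ih
    linarith

lemma refl_sq (p : ℕ) (hp : 1 ≤ p) :
    ∑ a ∈ Icc 1 (p - 1), (((p - a : ℕ) : ℤ))^2 = ∑ a ∈ Icc 1 (p - 1), ((a : ℤ))^2 := by
  apply Finset.sum_nbij' (i := fun a => p - a) (j := fun a => p - a)
  · intro a ha; simp only [Finset.mem_Icc] at ha ⊢; omega
  · intro a ha; simp only [Finset.mem_Icc] at ha ⊢; omega
  · intro a ha; simp only [Finset.mem_Icc] at ha; omega
  · intro a ha; simp only [Finset.mem_Icc] at ha; omega
  · intro a ha; rfl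

/-- For every odd prime `p`, `12·∑_{k=1}^{p−1} σ₁(k)·σ₁(p−k) = 5p³ − 6p² − 5p + 6`. -/
theorem twelve_mul_sum_sigma_mul_sigma (p : ℕ) (hp : p.Prime) (hodd : p % 2 = 1) :
    (12 : ℤ) * ∑ k ∈ Finset.Icc 1 (p - 1), (sigma1 k : ℤ) * (sigma1 (p - k) : ℤ) =
      5 * (p : ℤ) ^ 3 - 6 * (p : ℤ) ^ 2 - 5 * (p : ℤ) + 6 := by
  have hp2 : 2 ≤ p := hp.two_le
  have hne : (1 : ℕ) ≠ p := by omega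
  have hdiv : p.divisors = {1, p} := hp.divisors
  have hcast : ((p - 1 : ℕ) : ℤ) = (p : ℤ) - 1 := by
    push_cast [Nat.cast_sub (by omega : 1 ≤ p)]; ring
  have hcard : (Icc 1 (p - 1)).card = p - 1 := by rw [Nat.card_Icc]; omega
  -- named sums
  set S := ∑ q ∈ QS p, ((q.1 : ℤ) * (q.2.1 : ℤ)) with hS
  set P := ∑ q ∈ QS p, ((q.2.1 : ℤ))^2 with hP
  set B := ∑ q ∈ (QS p).filter (fun q => q.1 < q.2.1), ((q.2.1 : ℤ))^2 with hB
  set Aa := ∑ q ∈ (QS p).filter (fun q => q.1 < q.2.1), ((q.1 : ℤ))^2 with hAa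
  set C := ∑ q ∈ (QS p).filter (fun q => q.1 < q.2.1), ((q.1 : ℤ) * (q.2.1 : ℤ)) with hC
  -- Equation 1 : from master with F a b = (a+b)^2
  have h1 := master p (fun a b => ((a : ℤ) + (b : ℤ))^2)
  have l1 : ∑ q ∈ QS p, ((q.1 : ℤ) + (q.2.1 : ℤ))^2
      = ∑ q ∈ QS p, ((q.1 : ℤ))^2 + 2 * S + P := by
    rw [hS, hP, Finset.mul_sum, ← Finset.sum_add_distrib, ← Finset.sum_add_distrib]
    exact Finset.sum_congr rfl (fun q _ => by ring)
  have lsw : ∑ q ∈ QS p, ((q.1 : ℤ))^2 = P := by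
    rw [hP]; simpa using swapQ p (fun q => ((q.1 : ℤ))^2)
  have r1 : ∑ q ∈ (QS p).filter (fun q => q.1 < q.2.1),
      (((q.1 : ℤ) + ((q.2.1 - q.1 : ℕ) : ℤ))^2 + (((q.2.1 - q.1 : ℕ) : ℤ) + (q.1 : ℤ))^2)
      = 2 * B := by
    rw [hB, Finset.mul_sum]
    refine Finset.sum_congr rfl (fun q hq => ?_)
    have hab : q.1 ≤ q.2.1 := le_of_lt (Finset.mem_filter.mp hq).2
    rw [Nat.cast_sub hab]; ring
  have r2 : ∑ e ∈ p.divisors, ∑ a ∈ Icc 1 (e - 1),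
      ((a : ℤ) + ((e - a : ℕ) : ℤ))^2 = ((p : ℤ) - 1) * (p : ℤ)^2 := by
    rw [hdiv, Finset.sum_pair hne]
    have h0 : Icc (1:ℕ) (1 - 1) = ∅ := by simp
    rw [h0, Finset.sum_empty, zero_add]
    have : ∀ a ∈ Icc 1 (p - 1), ((a : ℤ) + ((p - a : ℕ) : ℤ))^2 = (p : ℤ)^2 := by
      intro a ha
      simp only [Finset.mem_Icc] at ha
      rw [Nat.cast_sub (by omega : a ≤ p)]; ring
    rw [Finset.sum_congr rfl this, Finset.sum_const, hcard, nsmul_eq_mul, hcast]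
  have e1 : P + 2 * S + P = 2 * B + ((p : ℤ) - 1) * (p : ℤ)^2 := by
    have := h1
    beta_reduce at this
    rw [l1, lsw, r1, r2] at this
    linarith
  -- Equation 2 : from master with F a b = b^2
  have h2 := master p (fun a b => ((b : ℤ))^2)
  have r3 : ∑ q ∈ (QS p).filter (fun q => q.1 < q.2.1),
      ((((q.2.1 - q.1 : ℕ) : ℤ))^2 + ((q.1 : ℤ))^2)
      = B - 2 * C + 2 * Aa := by
    rw [hB, hC, hAa, Finset.mul_sum, Finset.mul_sum, ← Finset.sum_sub_distrib,
      ← Finset.sum_add_distrib]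
    refine Finset.sum_congr rfl (fun q hq => ?_)
    have hab : q.1 ≤ q.2.1 := le_of_lt (Finset.mem_filter.mp hq).2
    rw [Nat.cast_sub hab]; ring
  have r4 : 6 * ∑ e ∈ p.divisors, ∑ a ∈ Icc 1 (e - 1), (((e - a : ℕ) : ℤ))^2
      = ((p : ℤ) - 1) * (p : ℤ) * (2 * (p : ℤ) - 1) := by
    rw [hdiv, Finset.sum_pair hne]
    have h0 : Icc (1:ℕ) (1 - 1) = ∅ := by simp
    rw [h0, Finset.sum_empty, zero_add, refl_sq p (by omega)]
    have hg := gauss2 (p - 1)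
    rw [hcast] at hg
    rw [hg]; ring
  have e2 : 6 * P = 6 * (B - 2 * C + 2 * Aa)
      + ((p : ℤ) - 1) * (p : ℤ) * (2 * (p : ℤ) - 1) := by
    have := h2
    beta_reduce at this
    rw [r3] at this
    rw [← hP] at this
    linarith [r4, this]
  -- diagonal value for `a = b`
  have r5 : ∑ e ∈ p.divisors, ∑ _x ∈ Icc 1 (e - 1), (((p / e : ℕ) : ℤ))^2
      = (p : ℤ) - 1 := by
    rw [hdiv, Finset.sum_pair hne]
    have h0 : Icc (1:ℕ) (1 - 1) = ∅ := by simp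
    rw [h0, Finset.sum_empty, zero_add]
    have hps : (p / p : ℕ) = 1 := Nat.div_self (by omega)
    rw [hps, Finset.sum_const, hcard, nsmul_eq_mul, hcast]
    norm_num
  have r6 : ∑ e ∈ p.divisors, ∑ _x ∈ Icc 1 (e - 1), (((p / e : ℕ) : ℤ) * ((p / e : ℕ) : ℤ))
      = (p : ℤ) - 1 := by
    rw [hdiv, Finset.sum_pair hne]
    have h0 : Icc (1:ℕ) (1 - 1) = ∅ := by simp
    rw [h0, Finset.sum_empty, zero_add]
    have hps : (p / p : ℕ) = 1 := Nat.div_self (by omega)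
    rw [hps, Finset.sum_const, hcard, nsmul_eq_mul, hcast]
    norm_num
  -- Equation 3 : from decomp with F a b = b^2
  have e3 : P = Aa + B + ((p : ℤ) - 1) := by
    have h3 := decomp p (fun a b => ((b : ℤ))^2)
    beta_reduce at h3
    rw [r5, ← hP, ← hAa, ← hB] at h3
    linarith
  -- Equation 4 : from decomp with F a b = a * b
  have e4 : S = 2 * C + ((p : ℤ) - 1) := by
    have h4 := decomp p (fun a b => (a : ℤ) * (b : ℤ))
    beta_reduce at h4
    have comm : ∑ q ∈ (QS p).filter (fun q => q.1 < q.2.1), ((q.2.1 : ℤ) * (q.1 : ℤ)) = C := by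
      rw [hC]; exact Finset.sum_congr rfl (fun q _ => by ring)
    rw [r6, comm, ← hS, ← hC] at h4
    linarith
  -- finish
  rw [← convQ p, ← hS]
  linear_combination 3 * e1 + e2 - 12 * e3 + 6 * e4
end

section
/- For every odd prime p, one has 2·∑_{x} σ₁((p²−x²)/4) = ∑_{k=1}^{p−1} σ₁(k)·σ₁(p−k), where the sum on the left runs over the odd integers x with 0 < x < p (for such x, (p²−x²)/4 is a positive integer). -/
open Finset

lemma sigma1_eq_sigma_one (n : ℕ) : sigma1 n = ArithmeticFunction.sigma 1 n :=
  (ArithmeticFunction.sigma_one_apply n).symm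

lemma sigma1_mul_of_coprime {a b : ℕ} (h : a.Coprime b) :
    sigma1 (a * b) = sigma1 a * sigma1 b := by
  simp only [sigma1_eq_sigma_one, ArithmeticFunction.isMultiplicative_sigma.map_mul_of_coprime h]

lemma Nat.Prime.coprime_sub_self {p i : ℕ} (hp : p.Prime) (hi₀ : 0 < i) (hip : i < p) :
    i.Coprime (p - i) :=
  (Nat.coprime_sub_self_right hip.le).mpr (Nat.coprime_of_lt_prime hi₀.ne' hip hp).symm

lemma sum_Icc_two_mul_eq_sum_add_reflect {M : Type*} [AddCommMonoid M] (f : ℕ → M) (m : ℕ) :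
    ∑ k ∈ Icc 1 (2 * m), f k = ∑ i ∈ Icc 1 m, (f i + f (2 * m + 1 - i)) := by
  have hsplit : Icc 1 (2 * m) = Icc 1 m ∪ Icc (m + 1) (2 * m) := by
    ext k; simp only [mem_union, mem_Icc]; omega
  have hdisj : Disjoint (Icc 1 m) (Icc (m + 1) (2 * m)) :=
    disjoint_left.mpr fun k hk hk' => by simp only [mem_Icc] at hk hk'; omega
  have hreflect : ∑ k ∈ Icc (m + 1) (2 * m), f k = ∑ i ∈ Icc 1 m, f (2 * m + 1 - i) := by
    refine sum_nbij' (fun k => 2 * m + 1 - k) (fun i => 2 * m + 1 - i) ?_ ?_ ?_ ?_ ?_ <;>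
      intro k hk <;> simp only [mem_Icc] at hk ⊢
    all_goals first | omega | (congr 1; omega)
  rw [hsplit, sum_union hdisj, hreflect, sum_add_distrib]

lemma sq_sub_sq_sub_two_mul_div_four {n i : ℕ} (h : 2 * i ≤ n) :
    (n ^ 2 - (n - 2 * i) ^ 2) / 4 = i * (n - i) := by
  obtain ⟨j, rfl⟩ : ∃ j, n = 2 * i + j := ⟨n - 2 * i, by omega⟩
  have hsq : (2 * i + j) ^ 2 = j ^ 2 + 4 * (i * (i + j)) := by ring
  rw [show 2 * i + j - 2 * i = j by omega, show 2 * i + j - i = i + j by omega, hsq,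
    Nat.add_sub_cancel_left, Nat.mul_div_cancel_left _ (by norm_num)]

lemma sum_filter_odd_Ioo_sq_sub_sq_div_four {M : Type*} [AddCommMonoid M] (f : ℕ → M) {n : ℕ}
    (hn : Odd n) :
    ∑ x ∈ (Ioo 0 n).filter Odd, f ((n ^ 2 - x ^ 2) / 4) = ∑ i ∈ Icc 1 (n / 2), f (i * (n - i)) := by
  obtain ⟨m, rfl⟩ := hn
  refine (sum_nbij' (fun i => 2 * m + 1 - 2 * i) (fun x => (2 * m + 1 - x) / 2)
    ?_ ?_ ?_ ?_ ?_).symm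
  · intro i hi
    rw [mem_Icc] at hi
    exact mem_filter.mpr ⟨mem_Ioo.mpr ⟨by omega, by omega⟩, m - i, by omega⟩
  · intro x hx
    obtain ⟨hx, t, _⟩ := mem_filter.mp hx
    rw [mem_Ioo] at hx
    exact mem_Icc.mpr ⟨by omega, by omega⟩
  · intro i hi
    rw [mem_Icc] at hi
    omega
  · intro x hx
    obtain ⟨hx, t, _⟩ := mem_filter.mp hx
    rw [mem_Ioo] at hx
    omega
  · intro i hi
    rw [mem_Icc] at hi
    rw [sq_sub_sq_sub_two_mul_div_four (by omega)]

/-- For every odd prime `p`,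
`2·∑_{x odd, 0 < x < p} σ₁((p²−x²)/4) = ∑_{k=1}^{p−1} σ₁(k)·σ₁(p−k)`. -/
theorem two_mul_sum_sigma_eq_sum_sigma_mul_sigma (p : ℕ) (hp : p.Prime)
    (hodd : p % 2 = 1) :
    2 * ∑ x ∈ (Finset.Ioo 0 p).filter (fun x => Odd x), sigma1 ((p ^ 2 - x ^ 2) / 4) =
      ∑ k ∈ Finset.Icc 1 (p - 1), sigma1 k * sigma1 (p - k) := by
  obtain ⟨m, rfl⟩ : ∃ m, p = 2 * m + 1 := ⟨p / 2, by omega⟩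
  rw [sum_filter_odd_Ioo_sq_sub_sq_div_four _ ⟨m, rfl⟩, show (2 * m + 1) / 2 = m by omega,
    Nat.add_sub_cancel, sum_Icc_two_mul_eq_sum_add_reflect, two_mul, ← sum_add_distrib]
  refine sum_congr rfl fun i hi => ?_
  rw [mem_Icc] at hi
  rw [sigma1_mul_of_coprime (hp.coprime_sub_self (by omega) (by omega)),
    show 2 * m + 1 - (2 * m + 1 - i) = i by omega, mul_comm (sigma1 (2 * m + 1 - i))]
end

section
/- For every odd prime p, one has 24·∑_{x} σ₁((p²−x²)/4) = 5p³ − 6p² − 5p + 6, where the sum runs over the odd integers x with 0 < x < p (for such x, (p²−x²)/4 is a positive integer). (Combined with the formula a_{p²} = 24·∑_{x∈ℤ, 4∣(p²−x²)} σ₁((p²−x²)/4) + 12p² − 2 = 10·(1 + deg F_{p²,i}), this shows that the degree of any Humbert component F_{p²,i} is p³ − p.) -/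
/-!
Write `p = 2h + 1` and `x = p - 2a`. Then `(p² - x²)/4 = a (p - a)` with `a` and `p - a`
coprime, so `σ₁` splits, and by the symmetry `a ↔ p - a` the left side is
`12 ∑_{0<m<p} σ₁(m) σ₁(p - m)`. Besge's formula
`12 ∑_{0<m<n} σ₁(m) σ₁(n - m) = 5 σ₃(n) + (1 - 6n) σ₁(n)` then gives the result, since
`σ₁(p) = p + 1` and `σ₃(p) = p³ + 1`.

Besge's formula is proved by Liouville's elementary method. Its left side is `12 ∑ ab` over the
positive solutions of `ax + by = n`, and `-4ab = (a - b)² - (a + b)²`. The swap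
`(a, b, x, y) ↦ (b, a, y, x)` and the shears `(a, b, x, y) ↦ (a + b, b, x, y - x)` and
`(a, b, x, y) ↦ (a, a + b, x - y, y)` match almost all terms of the resulting sums against each
other; what is left are sums over solutions with `x = y`, `a = b` or `x = 0`, which are divisor
sums.
-/

open Finset

theorem Finset.sum_filter_lt_add_eq_add_gt {ι α M : Type*} [LinearOrder α] [AddCommMonoid M]
    (s : Finset ι) (u v : ι → α) (f : ι → M) :
    ∑ i ∈ s, f i = ∑ i ∈ s.filter (fun i => u i < v i), f i +
      ∑ i ∈ s.filter (fun i => u i = v i), f i +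
        ∑ i ∈ s.filter (fun i => v i < u i), f i := by
  rw [add_assoc, ← sum_filter_add_sum_filter_not s (fun i => u i < v i),
    ← sum_filter_add_sum_filter_not (s.filter fun i => ¬u i < v i) (fun i => u i = v i),
    filter_filter, filter_filter]
  congr 2
  · refine sum_congr (filter_congr fun i _ => ?_) fun _ _ => rfl
    exact ⟨fun h => h.2, fun h => ⟨h.not_lt, h⟩⟩
  · refine sum_congr (filter_congr fun i _ => ?_) fun _ _ => rfl
    exact ⟨fun h => lt_of_le_of_ne (not_lt.mp h.1) (Ne.symm h.2),
      fun h => ⟨not_lt.mpr h.le, h.ne'⟩⟩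

theorem sum_Icc_sq (d : ℕ) :
    6 * ∑ k ∈ Icc 1 d, (k : ℤ) ^ 2 = 2 * (d : ℤ) ^ 3 + 3 * (d : ℤ) ^ 2 + d := by
  induction d with
  | zero => simp
  | succ d ih =>
    rw [sum_Icc_succ_top (by omega), mul_add, ih]
    push_cast
    ring

theorem sum_Ico_eq_two_nsmul_sum_Icc_of_symm {M : Type*} [AddCommMonoid M] (h : ℕ) (g : ℕ → M)
    (hg : ∀ m ≤ 2 * h + 1, g (2 * h + 1 - m) = g m) :
    ∑ m ∈ Ico 1 (2 * h + 1), g m = 2 • ∑ a ∈ Icc 1 h, g a := by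
  have hupper : ∑ m ∈ Ico (h + 1) (2 * h + 1), g m = ∑ a ∈ Icc 1 h, g a := by
    rw [← sum_congr rfl fun m hm => hg m (mem_Ico.mp hm).2.le,
      sum_Ico_reflect g _ (by omega), ← Ico_add_one_right_eq_Icc]
    congr 2 <;> omega
  rw [← sum_Ico_consecutive g (by omega : 1 ≤ h + 1) (by omega), hupper,
    Ico_add_one_right_eq_Icc, two_nsmul]

theorem sum_filter_odd_eq_sum_Icc {M : Type*} [AddCommMonoid M] (h : ℕ) (f : ℕ → M) :
    ∑ x ∈ (Ioo 0 (2 * h + 1)).filter (fun x => Odd x), f (((2 * h + 1) ^ 2 - x ^ 2) / 4) =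
      ∑ a ∈ Icc 1 h, f (a * (2 * h + 1 - a)) := by
  refine sum_nbij' (fun x => h - x / 2) (fun a => 2 * (h - a) + 1) ?_ ?_ ?_ ?_ ?_
  · rintro x hx
    obtain ⟨⟨-, hxp⟩, k, rfl⟩ := by simpa only [mem_filter, mem_Ioo] using hx
    simp only [mem_Icc]
    omega
  · intro a ha
    simp only [mem_Icc] at ha
    simp only [mem_filter, mem_Ioo]
    exact ⟨⟨by omega, by omega⟩, odd_two_mul_add_one _⟩
  · rintro x hx
    obtain ⟨⟨-, hxp⟩, k, rfl⟩ := by simpa only [mem_filter, mem_Ioo] using hx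
    omega
  · intro a ha
    simp only [mem_Icc] at ha
    omega
  · rintro x hx
    obtain ⟨⟨-, hxp⟩, k, rfl⟩ := by simpa only [mem_filter, mem_Ioo] using hx
    congr 1
    have hk : k ≤ h := by omega
    obtain ⟨j, rfl⟩ := Nat.exists_eq_add_of_le hk
    rw [show (2 * k + 1) / 2 = k by omega, show k + j - k = j by omega,
      show 2 * (k + j) + 1 - j = 2 * k + j + 1 by omega,
      show (2 * (k + j) + 1) ^ 2 = (2 * k + 1) ^ 2 + 4 * (j * (2 * k + j + 1)) by ring,
      Nat.add_sub_cancel_left, Nat.mul_div_cancel_left _ (by norm_num)]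

theorem sigma1_mul_sub_of_prime {p a : ℕ} (hp : p.Prime) (ha : 0 < a) (hap : a < p) :
    sigma1 (a * (p - a)) = sigma1 a * sigma1 (p - a) :=
  Nat.Coprime.sum_divisors_mul <| (Nat.coprime_sub_self_right hap.le).mpr
    (Nat.coprime_of_lt_prime ha.ne' hap hp).symm

namespace Besge

/-- The positive solutions `(a, b, x, y)` of `a * x + b * y = n`. -/
def reps (n : ℕ) : Finset (ℕ × ℕ × ℕ × ℕ) :=
  (Icc 1 n ×ˢ Icc 1 n ×ˢ Icc 1 n ×ˢ Icc 1 n).filter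
    fun q => q.1 * q.2.2.1 + q.2.1 * q.2.2.2 = n

theorem mem_reps {n a b x y : ℕ} :
    (a, b, x, y) ∈ reps n ↔ 0 < a ∧ 0 < b ∧ 0 < x ∧ 0 < y ∧ a * x + b * y = n := by
  simp only [reps, mem_filter, mem_product, mem_Icc]
  constructor
  · rintro ⟨⟨⟨ha, -⟩, ⟨hb, -⟩, ⟨hx, -⟩, ⟨hy, -⟩⟩, h⟩
    exact ⟨ha, hb, hx, hy, h⟩
  · rintro ⟨ha, hb, hx, hy, h⟩
    refine ⟨⟨⟨ha, ?_⟩, ⟨hb, ?_⟩, ⟨hx, ?_⟩, ⟨hy, ?_⟩⟩, h⟩ <;> nlinarith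

def weakReps (n : ℕ) : Finset (ℕ × ℕ × ℕ × ℕ) :=
  (Icc 1 n ×ˢ Icc 1 n ×ˢ range (n + 1) ×ˢ Icc 1 n).filter
    fun q => q.1 ≤ q.2.1 ∧ q.1 * q.2.2.1 + q.2.1 * q.2.2.2 = n

theorem mem_weakReps {n a b x y : ℕ} :
    (a, b, x, y) ∈ weakReps n ↔ 0 < a ∧ a ≤ b ∧ 0 < y ∧ a * x + b * y = n := by
  simp only [weakReps, mem_filter, mem_product, mem_Icc, mem_range]
  constructor
  · rintro ⟨⟨⟨ha, -⟩, -, -, ⟨hy, -⟩⟩, hab, h⟩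
    exact ⟨ha, hab, hy, h⟩
  · rintro ⟨ha, hab, hy, h⟩
    refine ⟨⟨⟨ha, ?_⟩, ⟨by omega, ?_⟩, ?_, ⟨hy, ?_⟩⟩, hab, h⟩ <;> nlinarith

def swap (q : ℕ × ℕ × ℕ × ℕ) : ℕ × ℕ × ℕ × ℕ := (q.2.1, q.1, q.2.2.2, q.2.2.1)

theorem sum_filter_reps_swap {M : Type*} [AddCommMonoid M] (n : ℕ)
    (p : ℕ × ℕ × ℕ × ℕ → Prop) [DecidablePred p] (f : ℕ × ℕ × ℕ × ℕ → M) :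
    ∑ q ∈ (reps n).filter p, f q =
      ∑ q ∈ (reps n).filter (fun q => p (swap q)), f (swap q) := by
  refine sum_nbij' swap swap ?_ ?_ (fun _ _ => rfl) (fun _ _ => rfl) (fun _ _ => rfl) <;>
  · rintro ⟨a, b, x, y⟩ hq
    rw [mem_filter, mem_reps] at hq
    obtain ⟨⟨ha, hb, hx, hy, h⟩, hp⟩ := hq
    exact mem_filter.mpr ⟨mem_reps.mpr ⟨hb, ha, hy, hx, by dsimp only at h ⊢; omega⟩, hp⟩

theorem sum_reps_sub_sq (n : ℕ) :
    ∑ q ∈ reps n, ((q.1 : ℤ) - q.2.1) ^ 2 =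
      2 * ∑ q ∈ (reps n).filter (fun q => q.2.1 < q.1), ((q.1 : ℤ) - q.2.1) ^ 2 := by
  have hdiag : ∑ q ∈ (reps n).filter (fun q => q.1 = q.2.1), ((q.1 : ℤ) - q.2.1) ^ 2 = 0 :=
    sum_eq_zero fun q hq => by rw [(mem_filter.mp hq).2, sub_self, zero_pow two_ne_zero]
  have hswap : ∑ q ∈ (reps n).filter (fun q => q.1 < q.2.1), ((q.1 : ℤ) - q.2.1) ^ 2 =
      ∑ q ∈ (reps n).filter (fun q => q.2.1 < q.1), ((q.1 : ℤ) - q.2.1) ^ 2 := by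
    rw [sum_filter_reps_swap]
    exact sum_congr rfl fun q _ => by simp only [swap]; ring
  rw [sum_filter_lt_add_eq_add_gt _ (fun q => q.1) (fun q => q.2.1), hdiag, hswap]
  ring

theorem sum_reps_add_sq (n : ℕ) :
    ∑ q ∈ reps n, ((q.1 : ℤ) + q.2.1) ^ 2 =
      2 * ∑ q ∈ (reps n).filter (fun q => q.2.2.1 < q.2.2.2), ((q.1 : ℤ) + q.2.1) ^ 2 +
        ∑ q ∈ (reps n).filter (fun q => q.2.2.1 = q.2.2.2), ((q.1 : ℤ) + q.2.1) ^ 2 := by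
  have hswap : ∑ q ∈ (reps n).filter (fun q => q.2.2.2 < q.2.2.1), ((q.1 : ℤ) + q.2.1) ^ 2 =
      ∑ q ∈ (reps n).filter (fun q => q.2.2.1 < q.2.2.2), ((q.1 : ℤ) + q.2.1) ^ 2 := by
    rw [sum_filter_reps_swap]
    exact sum_congr rfl fun q _ => by simp only [swap]; ring
  rw [sum_filter_lt_add_eq_add_gt _ (fun q => q.2.2.1) (fun q => q.2.2.2), hswap]
  ring

theorem sum_reps_filter_b_lt_a_shear {M : Type*} [AddCommMonoid M] (n : ℕ)
    (f : ℕ × ℕ × ℕ × ℕ → M) :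
    ∑ q ∈ (reps n).filter (fun q => q.2.1 < q.1), f q =
      ∑ q ∈ (reps n).filter (fun q => q.2.2.1 < q.2.2.2),
        f (q.1 + q.2.1, q.2.1, q.2.2.1, q.2.2.2 - q.2.2.1) := by
  refine sum_nbij' (fun q => (q.1 - q.2.1, q.2.1, q.2.2.1, q.2.2.1 + q.2.2.2))
    (fun q => (q.1 + q.2.1, q.2.1, q.2.2.1, q.2.2.2 - q.2.2.1)) ?_ ?_ ?_ ?_ ?_
  · rintro ⟨a, b, x, y⟩ hq
    simp only [mem_filter, mem_reps] at hq ⊢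
    obtain ⟨⟨ha, hb, hx, hy, h⟩, hba⟩ := hq
    refine ⟨⟨by omega, hb, hx, by omega, ?_⟩, by omega⟩
    have : (a - b) * x + b * (x + y) = a * x + b * y := by
      rw [Nat.sub_mul, Nat.mul_add]
      have := Nat.mul_le_mul_right x hba.le
      omega
    omega
  · rintro ⟨a, b, x, y⟩ hq
    simp only [mem_filter, mem_reps] at hq ⊢
    obtain ⟨⟨ha, hb, hx, hy, h⟩, hxy⟩ := hq
    refine ⟨⟨by omega, hb, hx, by omega, ?_⟩, by omega⟩
    have : (a + b) * x + b * (y - x) = a * x + b * y := by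
      rw [Nat.add_mul, Nat.mul_sub]
      have := Nat.mul_le_mul_left b hxy.le
      omega
    omega
  · rintro ⟨a, b, x, y⟩ hq
    obtain ⟨-, hba⟩ := mem_filter.mp hq
    simp only [Prod.mk.injEq, true_and] at hba ⊢
    omega
  · rintro ⟨a, b, x, y⟩ hq
    obtain ⟨-, hxy⟩ := mem_filter.mp hq
    simp only [Prod.mk.injEq, true_and] at hxy ⊢
    omega
  · rintro ⟨a, b, x, y⟩ hq
    obtain ⟨-, hba⟩ := mem_filter.mp hq
    simp only at hba ⊢
    rw [Nat.sub_add_cancel hba.le, Nat.add_sub_cancel_left]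

theorem reps_filter_a_le_b_eq_weakReps_filter_x_pos (n : ℕ) :
    (reps n).filter (fun q => q.1 ≤ q.2.1) = (weakReps n).filter (fun q => 0 < q.2.2.1) := by
  ext ⟨a, b, x, y⟩
  simp only [mem_filter, mem_reps, mem_weakReps]
  constructor
  · rintro ⟨⟨ha, -, hx, hy, h⟩, hab⟩
    exact ⟨⟨ha, hab, hy, h⟩, hx⟩
  · rintro ⟨⟨ha, hab, hy, h⟩, hx⟩
    exact ⟨⟨ha, by omega, hx, hy, h⟩, hab⟩

theorem sum_reps_filter_y_le_x_shear {M : Type*} [AddCommMonoid M] (n : ℕ)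
    (f : ℕ × ℕ × ℕ × ℕ → M) :
    ∑ q ∈ (reps n).filter (fun q => q.2.2.2 ≤ q.2.2.1), f q =
      ∑ q ∈ (weakReps n).filter (fun q => q.1 < q.2.1),
        f (q.1, q.2.1 - q.1, q.2.2.1 + q.2.2.2, q.2.2.2) := by
  refine sum_nbij' (fun q => (q.1, q.1 + q.2.1, q.2.2.1 - q.2.2.2, q.2.2.2))
    (fun q => (q.1, q.2.1 - q.1, q.2.2.1 + q.2.2.2, q.2.2.2)) ?_ ?_ ?_ ?_ ?_
  · rintro ⟨a, b, x, y⟩ hq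
    simp only [mem_filter, mem_reps, mem_weakReps] at hq ⊢
    obtain ⟨⟨ha, hb, hx, hy, h⟩, hyx⟩ := hq
    refine ⟨⟨ha, by omega, hy, ?_⟩, by omega⟩
    have : a * (x - y) + (a + b) * y = a * x + b * y := by
      rw [Nat.mul_sub, Nat.add_mul]
      have := Nat.mul_le_mul_left a hyx
      omega
    omega
  · rintro ⟨a, b, x, y⟩ hq
    simp only [mem_filter, mem_reps, mem_weakReps] at hq ⊢
    obtain ⟨⟨ha, hab, hy, h⟩, hab'⟩ := hq
    refine ⟨⟨ha, by omega, by omega, hy, ?_⟩, by omega⟩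
    have : a * (x + y) + (b - a) * y = a * x + b * y := by
      rw [Nat.mul_add, Nat.sub_mul]
      have := Nat.mul_le_mul_right y hab
      omega
    omega
  · rintro ⟨a, b, x, y⟩ hq
    obtain ⟨-, hyx⟩ := mem_filter.mp hq
    simp only [Prod.mk.injEq, true_and, and_true] at hyx ⊢
    omega
  · rintro ⟨a, b, x, y⟩ hq
    obtain ⟨-, hab⟩ := mem_filter.mp hq
    simp only [Prod.mk.injEq, true_and, and_true] at hab ⊢
    omega
  · rintro ⟨a, b, x, y⟩ hq
    obtain ⟨-, hyx⟩ := mem_filter.mp hq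
    simp only at hyx ⊢
    rw [Nat.add_sub_cancel_left, Nat.sub_add_cancel hyx]

theorem sum_weakReps_filter_a_eq_b (n : ℕ) :
    ∑ q ∈ (weakReps n).filter (fun q => q.1 = q.2.1), (q.1 : ℤ) ^ 2 = n * sigma1 n := by
  have hfiber : ∀ d ∈ n.divisors, (n : ℤ) * d = ∑ _y ∈ Icc 1 (n / d), (d : ℤ) ^ 2 := by
    intro d hd
    rw [sum_const, Nat.card_Icc, Nat.add_sub_cancel, nsmul_eq_mul, sq, ← mul_assoc]
    norm_cast
    rw [Nat.div_mul_cancel (Nat.dvd_of_mem_divisors hd)]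
  rw [sigma1, Nat.cast_sum, mul_sum, sum_congr rfl hfiber, sum_sigma']
  refine sum_nbij' (fun q => ⟨q.1, q.2.2.2⟩) (fun s => (s.1, s.1, n / s.1 - s.2, s.2))
    ?_ ?_ ?_ (fun _ _ => rfl) (fun _ _ => rfl)
  · rintro ⟨a, b, x, y⟩ hq
    simp only [mem_filter, mem_weakReps, mem_sigma, Nat.mem_divisors, mem_Icc] at hq ⊢
    obtain ⟨⟨ha, -, hy, h⟩, rfl⟩ := hq
    have hn : n = a * (x + y) := by rw [Nat.mul_add, h]
    refine ⟨⟨⟨x + y, hn⟩, hn ▸ Nat.mul_ne_zero ha.ne' (by omega)⟩, hy, ?_⟩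
    rw [hn, Nat.mul_div_cancel_left _ ha]
    omega
  · rintro ⟨d, y⟩ hs
    simp only [mem_filter, mem_weakReps, mem_sigma, Nat.mem_divisors, mem_Icc] at hs ⊢
    obtain ⟨⟨hdn, hn⟩, hy, hyd⟩ := hs
    have hd : 0 < d := Nat.pos_of_dvd_of_pos hdn (Nat.pos_of_ne_zero hn)
    refine ⟨⟨hd, le_rfl, hy, ?_⟩, trivial⟩
    rw [← Nat.mul_add, Nat.sub_add_cancel hyd, Nat.mul_div_cancel' hdn]
  · rintro ⟨a, b, x, y⟩ hq
    simp only [mem_filter, mem_weakReps] at hq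
    obtain ⟨⟨ha, -, -, h⟩, rfl⟩ := hq
    simp only [Prod.mk.injEq, true_and, and_true]
    rw [← h, ← Nat.mul_add, Nat.mul_div_cancel_left _ ha, Nat.add_sub_cancel]

theorem sum_weakReps_filter_x_eq_zero (n : ℕ) :
    ∑ q ∈ (weakReps n).filter (fun q => q.2.2.1 = 0), (q.1 : ℤ) ^ 2 =
      ∑ d ∈ n.divisors, ∑ k ∈ Icc 1 d, (k : ℤ) ^ 2 := by
  rw [sum_sigma']
  refine sum_nbij' (fun q => ⟨q.2.1, q.1⟩) (fun s => (s.2, s.1, 0, n / s.1))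
    ?_ ?_ ?_ (fun _ _ => rfl) (fun _ _ => rfl)
  · rintro ⟨a, b, x, y⟩ hq
    simp only [mem_filter, mem_weakReps, mem_sigma, Nat.mem_divisors, mem_Icc] at hq ⊢
    obtain ⟨⟨ha, hab, hy, h⟩, rfl⟩ := hq
    simp only [mul_zero, zero_add] at h
    exact ⟨⟨⟨y, h.symm⟩, h ▸ Nat.mul_ne_zero (by omega) hy.ne'⟩, ha, hab⟩
  · rintro ⟨d, k⟩ hs
    simp only [mem_filter, mem_weakReps, mem_sigma, Nat.mem_divisors, mem_Icc] at hs ⊢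
    obtain ⟨⟨hdn, hn⟩, hk, hkd⟩ := hs
    have hd : 0 < d := Nat.pos_of_dvd_of_pos hdn (Nat.pos_of_ne_zero hn)
    have hy : 0 < n / d := Nat.div_pos (Nat.le_of_dvd (Nat.pos_of_ne_zero hn) hdn) hd
    refine ⟨⟨hk, hkd, hy, ?_⟩, trivial⟩
    rw [mul_zero, zero_add, Nat.mul_div_cancel' hdn]
  · rintro ⟨a, b, x, y⟩ hq
    simp only [mem_filter, mem_weakReps] at hq
    obtain ⟨⟨ha, hab, -, h⟩, rfl⟩ := hq
    simp only [mul_zero, zero_add] at h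
    simp only [Prod.mk.injEq, true_and]
    rw [← h, Nat.mul_div_cancel_left _ (by omega)]

theorem sum_reps_filter_x_eq_y (n : ℕ) :
    ∑ q ∈ (reps n).filter (fun q => q.2.2.1 = q.2.2.2), ((q.1 : ℤ) + q.2.1) ^ 2 =
      ∑ d ∈ n.divisors, ((d : ℤ) ^ 3 - (d : ℤ) ^ 2) := by
  have hfiber : ∀ d ∈ n.divisors,
      (d : ℤ) ^ 3 - (d : ℤ) ^ 2 = ∑ _a ∈ Ico 1 d, (d : ℤ) ^ 2 := by
    intro d hd
    have hd : 0 < d := Nat.pos_of_mem_divisors hd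
    rw [sum_const, Nat.card_Ico, nsmul_eq_mul, Nat.cast_sub hd]
    ring
  rw [sum_congr rfl hfiber, sum_sigma']
  refine sum_nbij' (fun q => ⟨q.1 + q.2.1, q.1⟩) (fun s => (s.2, s.1 - s.2, n / s.1, n / s.1))
    ?_ ?_ ?_ ?_ ?_
  · rintro ⟨a, b, x, y⟩ hq
    simp only [mem_filter, mem_reps, mem_sigma, Nat.mem_divisors, mem_Ico] at hq ⊢
    obtain ⟨⟨ha, hb, hx, -, h⟩, rfl⟩ := hq
    have hn : 0 < n := by nlinarith
    exact ⟨⟨⟨x, by rw [Nat.add_mul, h]⟩, hn.ne'⟩, ha, by omega⟩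
  · rintro ⟨d, a⟩ hs
    simp only [mem_filter, mem_reps, mem_sigma, Nat.mem_divisors, mem_Ico] at hs ⊢
    obtain ⟨⟨hdn, hn⟩, ha, had⟩ := hs
    have hx : 0 < n / d := Nat.div_pos (Nat.le_of_dvd (Nat.pos_of_ne_zero hn) hdn) (by omega)
    refine ⟨⟨ha, by omega, hx, hx, ?_⟩, trivial⟩
    rw [← Nat.add_mul, Nat.add_sub_cancel' had.le, Nat.mul_div_cancel' hdn]
  · rintro ⟨a, b, x, y⟩ hq
    simp only [mem_filter, mem_reps] at hq
    obtain ⟨⟨ha, hb, -, -, h⟩, rfl⟩ := hq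
    simp only [Prod.mk.injEq, Nat.add_sub_cancel_left, true_and]
    rw [← h, ← Nat.add_mul, Nat.mul_div_cancel_left _ (by omega), and_self]
  · rintro ⟨d, a⟩ hs
    simp only [mem_sigma, mem_Ico] at hs
    simp only [Nat.add_sub_cancel' hs.2.2.le]
  · rintro ⟨a, b, x, y⟩ -
    push_cast
    ring

theorem sum_sq_reps_x_lt_y_sub_b_lt_a (n : ℕ) :
    ∑ q ∈ (reps n).filter (fun q => q.2.2.1 < q.2.2.2), (q.1 : ℤ) ^ 2 -
        ∑ q ∈ (reps n).filter (fun q => q.2.1 < q.1), (q.1 : ℤ) ^ 2 =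
      n * sigma1 n - ∑ d ∈ n.divisors, ∑ k ∈ Icc 1 d, (k : ℤ) ^ 2 := by
  have hxy := sum_filter_add_sum_filter_not (reps n) (fun q => q.2.2.1 < q.2.2.2)
    (fun q => (q.1 : ℤ) ^ 2)
  have hab := sum_filter_add_sum_filter_not (reps n) (fun q => q.2.1 < q.1)
    (fun q => (q.1 : ℤ) ^ 2)
  simp only [not_lt] at hxy hab
  rw [sum_reps_filter_y_le_x_shear] at hxy
  dsimp only at hxy
  rw [reps_filter_a_le_b_eq_weakReps_filter_x_pos] at hab
  have hweak_ab := sum_filter_lt_add_eq_add_gt (weakReps n) (fun q => q.1) (fun q => q.2.1)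
    (fun q => (q.1 : ℤ) ^ 2)
  have hweak_x := sum_filter_lt_add_eq_add_gt (weakReps n) (fun q => q.2.2.1) (fun _ => 0)
    (fun q => (q.1 : ℤ) ^ 2)
  have hba_empty : ∑ q ∈ (weakReps n).filter (fun q => q.2.1 < q.1), (q.1 : ℤ) ^ 2 = 0 := by
    refine sum_eq_zero fun ⟨a, b, x, y⟩ hq => ?_
    simp only [mem_filter, mem_weakReps] at hq
    omega
  simp only [Nat.not_lt_zero, filter_false, sum_empty, add_zero, hba_empty] at hweak_ab hweak_x
  rw [sum_weakReps_filter_a_eq_b] at hweak_ab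
  rw [sum_weakReps_filter_x_eq_zero] at hweak_x
  linarith

theorem sum_sigma1_mul_sigma1_eq_sum_reps (n : ℕ) :
    ∑ m ∈ Ico 1 n, sigma1 m * sigma1 (n - m) = ∑ q ∈ reps n, q.1 * q.2.1 := by
  simp only [sigma1, sum_mul_sum, ← sum_product']
  rw [sum_sigma']
  refine sum_nbij' (fun s => (s.2.1, s.2.2, s.1 / s.2.1, (n - s.1) / s.2.2))
    (fun q => ⟨q.1 * q.2.2.1, (q.1, q.2.1)⟩) ?_ ?_ ?_ ?_ (fun _ _ => rfl)
  · rintro ⟨m, d, e⟩ hs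
    simp only [mem_sigma, mem_product, mem_Ico, Nat.mem_divisors, mem_reps] at hs ⊢
    obtain ⟨⟨hm, hmn⟩, ⟨hdm, -⟩, ⟨hen, -⟩⟩ := hs
    refine ⟨Nat.pos_of_dvd_of_pos hdm hm, Nat.pos_of_dvd_of_pos hen (by omega),
      Nat.div_pos (Nat.le_of_dvd hm hdm) (Nat.pos_of_dvd_of_pos hdm hm),
      Nat.div_pos (Nat.le_of_dvd (by omega) hen) (Nat.pos_of_dvd_of_pos hen (by omega)), ?_⟩
    rw [Nat.mul_div_cancel' hdm, Nat.mul_div_cancel' hen]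
    omega
  · rintro ⟨a, b, x, y⟩ hq
    simp only [mem_sigma, mem_product, mem_Ico, Nat.mem_divisors, mem_reps] at hq ⊢
    obtain ⟨ha, hb, hx, hy, h⟩ := hq
    have hax : 0 < a * x := Nat.mul_pos ha hx
    have hby : 0 < b * y := Nat.mul_pos hb hy
    refine ⟨⟨hax, by omega⟩, ⟨Dvd.intro x rfl, hax.ne'⟩, ⟨?_, by omega⟩⟩
    rw [← h, Nat.add_sub_cancel_left]
    exact Dvd.intro y rfl
  · rintro ⟨m, d, e⟩ hs
    simp only [mem_sigma, mem_product, Nat.mem_divisors] at hs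
    simp only [Nat.mul_div_cancel' hs.2.1.1]
  · rintro ⟨a, b, x, y⟩ hq
    obtain ⟨ha, hb, -, -, h⟩ := mem_reps.mp hq
    simp only [Prod.mk.injEq, true_and]
    rw [← h, Nat.add_sub_cancel_left, Nat.mul_div_cancel_left _ ha,
      Nat.mul_div_cancel_left _ hb]
    exact ⟨rfl, rfl⟩

end Besge

open Besge in
theorem besge_formula (n : ℕ) :
    12 * ∑ m ∈ Ico 1 n, (sigma1 m : ℤ) * sigma1 (n - m) =
      5 * ∑ d ∈ n.divisors, (d : ℤ) ^ 3 + (1 - 6 * n) * sigma1 n := by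
  have hreps : ∑ m ∈ Ico 1 n, (sigma1 m : ℤ) * sigma1 (n - m) =
      ∑ q ∈ reps n, (q.1 : ℤ) * q.2.1 := by
    exact_mod_cast sum_sigma1_mul_sigma1_eq_sum_reps n
  have hpolar : -4 * ∑ q ∈ reps n, (q.1 : ℤ) * q.2.1 =
      ∑ q ∈ reps n, ((q.1 : ℤ) - q.2.1) ^ 2 -
        ∑ q ∈ reps n, ((q.1 : ℤ) + q.2.1) ^ 2 := by
    rw [mul_sum, ← sum_sub_distrib]
    exact sum_congr rfl fun _ _ => by ring
  have hsub : ∑ q ∈ (reps n).filter (fun q => q.2.1 < q.1), ((q.1 : ℤ) - q.2.1) ^ 2 =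
      ∑ q ∈ (reps n).filter (fun q => q.2.2.1 < q.2.2.2), (q.1 : ℤ) ^ 2 := by
    rw [sum_reps_filter_b_lt_a_shear]
    exact sum_congr rfl fun _ _ => by push_cast; ring
  have hadd : ∑ q ∈ (reps n).filter (fun q => q.2.1 < q.1), (q.1 : ℤ) ^ 2 =
      ∑ q ∈ (reps n).filter (fun q => q.2.2.1 < q.2.2.2), ((q.1 : ℤ) + q.2.1) ^ 2 := by
    rw [sum_reps_filter_b_lt_a_shear]
    exact sum_congr rfl fun _ _ => by push_cast; rfl
  have hdivisors : 6 * ∑ d ∈ n.divisors, ∑ k ∈ Icc 1 d, (k : ℤ) ^ 2 +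
      3 * ∑ d ∈ n.divisors, ((d : ℤ) ^ 3 - (d : ℤ) ^ 2) =
      5 * ∑ d ∈ n.divisors, (d : ℤ) ^ 3 + sigma1 n := by
    rw [sigma1, Nat.cast_sum, mul_sum, mul_sum, mul_sum, ← sum_add_distrib, ← sum_add_distrib]
    exact sum_congr rfl fun d _ => by rw [sum_Icc_sq]; ring
  rw [sum_reps_sub_sq, hsub, sum_reps_add_sq, ← hadd, sum_reps_filter_x_eq_y] at hpolar
  linarith [sum_sq_reps_x_lt_y_sub_b_lt_a n]

/-- For every odd prime `p`,
`24·∑_{x odd, 0 < x < p} σ₁((p²−x²)/4) = 5p³ − 6p² − 5p + 6`; this shows that the degree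
of any Humbert component `F_{p²,i}` is `p³ − p`. -/
theorem humbert_component_degree_sum (p : ℕ) (hp : p.Prime) (hodd : p % 2 = 1) :
    (24 : ℤ) *
        ∑ x ∈ (Finset.Ioo 0 p).filter (fun x => Odd x),
          (sigma1 ((p ^ 2 - x ^ 2) / 4) : ℤ) =
      5 * (p : ℤ) ^ 3 - 6 * (p : ℤ) ^ 2 - 5 * (p : ℤ) + 6 := by
  obtain ⟨h, rfl⟩ : ∃ h, p = 2 * h + 1 := ⟨p / 2, by omega⟩
  have hmul : ∀ a ∈ Icc 1 h,
      (sigma1 (a * (2 * h + 1 - a)) : ℤ) = sigma1 a * sigma1 (2 * h + 1 - a) := fun a ha => by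
    rw [mem_Icc] at ha
    exact_mod_cast sigma1_mul_sub_of_prime hp (by omega) (by omega)
  have hdouble := sum_Ico_eq_two_nsmul_sum_Icc_of_symm h
    (fun m => (sigma1 m : ℤ) * sigma1 (2 * h + 1 - m)) fun m hm => by
      rw [Nat.sub_sub_self hm, mul_comm]
  rw [two_nsmul, ← two_mul] at hdouble
  rw [sum_filter_odd_eq_sum_Icc h (fun m => (sigma1 m : ℤ)), sum_congr rfl hmul,
    show (24 : ℤ) = 12 * 2 by norm_num, mul_assoc, ← hdouble, besge_formula,
    hp.sum_divisors, sigma1, hp.sum_divisors]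
  push_cast
  ring
end
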